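/- arXiv:1201.4375 — 4 statements merged into one kernel-verified Lean document; each statement's English description precedes it below -/
import Mathlib

section
/- Let ℓ ≥ 1 be an integer. If a Sperner 2-partition system on a (2ℓ+1)-element set has exactly C(2ℓ, ℓ-1) partitions, then every partition in the system consists of one class of size ℓ and one class of size ℓ+1. -/
/-!
Every 2-partition of a `(2ℓ+1)`-set is `{A, Aᶜ}` with exactly one class of size at most `ℓ`. By
the Sperner condition these small classes form an intersecting antichain with as many members as
the system (two disjoint small classes `A ⊆ Bᶜ` would violate it). In an intersecting antichain
with members of size at most `ℓ`, replacing the lowest level `a < ℓ` by its upper shadow keeps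
both properties and, by the local LYM inequality `#𝒜 (n - a) ≤ #∂⁺𝒜 (a + 1)`, strictly increases
the size of the family. Once every member has size `ℓ`, Erdős–Ko–Rado bounds the family by
`C(2ℓ, ℓ-1)`, so a system of that size can only have small classes of size exactly `ℓ`.
-/

open Finset

/-- `P` is a partition of the finite set `X` into exactly `k` nonempty classes. -/
def IsPartitionInto {α : Type*} [DecidableEq α] (X : Finset α) (k : ℕ)
    (P : Finset (Finset α)) : Prop :=
  P.card = k ∧ (∀ A ∈ P, A.Nonempty) ∧ (∀ A ∈ P, A ⊆ X) ∧
    ∀ x ∈ X, ∃! A, A ∈ P ∧ x ∈ A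

/-- `Sys` is a Sperner `k`-partition system on the finite set `X`: every member is a
`k`-partition of `X` and no class of one partition is contained in a class of a
different partition of the system. -/
def IsSpernerPartitionSystem {α : Type*} [DecidableEq α] (X : Finset α) (k : ℕ)
    (Sys : Finset (Finset (Finset α))) : Prop :=
  (∀ P ∈ Sys, IsPartitionInto X k P) ∧
    ∀ P ∈ Sys, ∀ Q ∈ Sys, P ≠ Q → ∀ A ∈ P, ∀ B ∈ Q, ¬ A ⊆ B

/-- `SP n k` is the maximum number of partitions in a Sperner `k`-partition system
on an `n`-element set. -/
noncomputable def SP (n k : ℕ) : ℕ :=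
  sSup {m | ∃ Sys : Finset (Finset (Finset (Fin n))),
    IsSpernerPartitionSystem Finset.univ k Sys ∧ Sys.card = m}

open scoped FinsetFamily

namespace Finset

theorem card_eq_card_slice_add_card_filter_ne {α : Type*} (𝒜 : Finset (Finset α)) (a : ℕ) :
    #𝒜 = #(𝒜 # a) + #{A ∈ 𝒜 | #A ≠ a} :=
  (card_filter_add_card_filter_not fun A ↦ #A = a).symm

section RaiseLevel

variable {α : Type*} [Fintype α] [DecidableEq α] {𝒜 : Finset (Finset α)} {A B : Finset α}
  {a r : ℕ}

theorem card_mul_le_card_upShadow_mul (h𝒜 : (𝒜 : Set (Finset α)).Sized a)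
    (ha : a ≤ Fintype.card α) : #𝒜 * (Fintype.card α - a) ≤ #(∂⁺ 𝒜) * (a + 1) := by
  have h := card_mul_le_card_shadow_mul h𝒜.compls
  rwa [shadow_compls, card_compls, card_compls, Nat.sub_sub_self ha] at h

theorem card_le_card_upShadow (h𝒜 : (𝒜 : Set (Finset α)).Sized a)
    (hn : 2 * a + 1 ≤ Fintype.card α) : #𝒜 ≤ #(∂⁺ 𝒜) := by
  have h := card_mul_le_card_upShadow_mul h𝒜 (by omega)
  exact Nat.le_of_mul_le_mul_right
    ((Nat.mul_le_mul_left _ (by omega : a + 1 ≤ Fintype.card α - a)).trans h) a.succ_pos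

theorem card_lt_card_upShadow (h𝒜 : (𝒜 : Set (Finset α)).Sized a) (hne : 𝒜.Nonempty)
    (hn : 2 * a + 2 ≤ Fintype.card α) : #𝒜 < #(∂⁺ 𝒜) := by
  have h := card_mul_le_card_upShadow_mul h𝒜 (by omega)
  have hpos := hne.card_pos
  have : #𝒜 * (a + 2) ≤ #𝒜 * (Fintype.card α - a) := Nat.mul_le_mul_left _ (by omega)
  nlinarith

def raiseLevel (a : ℕ) (𝒜 : Finset (Finset α)) : Finset (Finset α) :=
  {A ∈ 𝒜 | #A ≠ a} ∪ ∂⁺ (𝒜 # a)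

theorem exists_subset_of_mem_raiseLevel (hB : B ∈ raiseLevel a 𝒜) : ∃ A ∈ 𝒜, A ⊆ B := by
  rcases mem_union.1 hB with hB | hB
  · exact ⟨B, (mem_filter.1 hB).1, subset_rfl⟩
  · obtain ⟨A, hA, hAB⟩ := exists_subset_of_mem_upShadow hB
    exact ⟨A, slice_subset hA, hAB⟩

theorem lt_card_of_mem_raiseLevel (ha : ∀ A ∈ 𝒜, a ≤ #A) (hB : B ∈ raiseLevel a 𝒜) :
    a < #B := by
  rcases mem_union.1 hB with hB | hB
  · obtain ⟨hB𝒜, hBa⟩ := mem_filter.1 hB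
    exact (ha B hB𝒜).lt_of_ne (Ne.symm hBa)
  · rw [sized_slice.upShadow hB]
    exact a.lt_succ_self

theorem card_le_of_mem_raiseLevel (hr : ∀ A ∈ 𝒜, #A ≤ r) (har : a < r)
    (hB : B ∈ raiseLevel a 𝒜) : #B ≤ r := by
  rcases mem_union.1 hB with hB | hB
  · exact hr B (mem_filter.1 hB).1
  · rw [sized_slice.upShadow hB]
    exact har

theorem _root_.Set.Intersecting.raiseLevel (h𝒜 : (𝒜 : Set (Finset α)).Intersecting) :
    (raiseLevel a 𝒜 : Set (Finset α)).Intersecting := by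
  intro B hB C hC hBC
  obtain ⟨B₀, hB₀, hB₀B⟩ := exists_subset_of_mem_raiseLevel hB
  obtain ⟨C₀, hC₀, hC₀C⟩ := exists_subset_of_mem_raiseLevel hC
  exact h𝒜 hB₀ hC₀ (hBC.mono hB₀B hC₀C)

theorem _root_.IsAntichain.raiseLevel (h𝒜 : IsAntichain (· ⊆ ·) (𝒜 : Set (Finset α)))
    (ha : ∀ A ∈ 𝒜, a ≤ #A) : IsAntichain (· ⊆ ·) (raiseLevel a 𝒜 : Set (Finset α)) := by
  intro B hB C hC hne hBC
  rcases mem_union.1 hC with hC | hC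
  · obtain ⟨A, hA, hAB⟩ := exists_subset_of_mem_raiseLevel hB
    have hAC : A = C := h𝒜.eq hA (mem_filter.1 hC).1 (hAB.trans hBC)
    exact hne (subset_antisymm hBC (hAC ▸ hAB))
  · have hCa : #C = a + 1 := sized_slice.upShadow hC
    exact hne (eq_of_subset_of_card_le hBC (hCa ▸ lt_card_of_mem_raiseLevel ha hB))

theorem card_raiseLevel (h𝒜 : IsAntichain (· ⊆ ·) (𝒜 : Set (Finset α))) :
    #(raiseLevel a 𝒜) = #{A ∈ 𝒜 | #A ≠ a} + #(∂⁺ (𝒜 # a)) := by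
  refine card_union_of_disjoint (disjoint_right.2 fun B hB hB' ↦ ?_)
  obtain ⟨A, hA, hAB⟩ := exists_subset_of_mem_upShadow hB
  have hBa : #B = a + 1 := sized_slice.upShadow hB
  have hAa : #A = a := sized_slice hA
  rw [h𝒜.eq (slice_subset hA) (mem_filter.1 hB').1 hAB] at hAa
  omega

theorem card_le_card_raiseLevel (h𝒜 : IsAntichain (· ⊆ ·) (𝒜 : Set (Finset α)))
    (hn : 2 * a + 1 ≤ Fintype.card α) : #𝒜 ≤ #(raiseLevel a 𝒜) := by
  rw [card_raiseLevel h𝒜, card_eq_card_slice_add_card_filter_ne 𝒜 a, add_comm]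
  exact Nat.add_le_add_left (card_le_card_upShadow sized_slice hn) _

theorem card_lt_card_raiseLevel (h𝒜 : IsAntichain (· ⊆ ·) (𝒜 : Set (Finset α)))
    (hn : 2 * a + 2 ≤ Fintype.card α) (hA : A ∈ 𝒜) (hAa : #A = a) :
    #𝒜 < #(raiseLevel a 𝒜) := by
  rw [card_raiseLevel h𝒜, card_eq_card_slice_add_card_filter_ne 𝒜 a, add_comm]
  exact Nat.add_lt_add_left
    (card_lt_card_upShadow sized_slice ⟨A, mem_slice.2 ⟨hA, hAa⟩⟩ hn) _

end RaiseLevel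

section IntersectingAntichain

variable {n r : ℕ} {𝒜 : Finset (Finset (Fin n))}

theorem card_le_choose_of_isAntichain_of_intersecting
    (h𝒜 : IsAntichain (· ⊆ ·) (𝒜 : Set (Finset (Fin n))))
    (hi : (𝒜 : Set (Finset (Fin n))).Intersecting) (hr : ∀ A ∈ 𝒜, #A ≤ r) (hrn : r ≤ n / 2) :
    #𝒜 ≤ (n - 1).choose (r - 1) := by
  suffices ∀ a ≤ r, ∀ ℬ : Finset (Finset (Fin n)),
      IsAntichain (· ⊆ ·) (ℬ : Set (Finset (Fin n))) → (ℬ : Set (Finset (Fin n))).Intersecting →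
      (∀ B ∈ ℬ, a ≤ #B ∧ #B ≤ r) → #ℬ ≤ (n - 1).choose (r - 1) from
    this 0 r.zero_le 𝒜 h𝒜 hi fun A hA ↦ ⟨A.card.zero_le, hr A hA⟩
  intro a har
  induction har using Nat.decreasingInduction with
  | self =>
    intro ℬ _ hi hr
    exact erdos_ko_rado hi (fun B hB ↦ le_antisymm (hr B hB).2 (hr B hB).1) hrn
  | of_succ a har ih =>
    intro ℬ h𝒜 hi hr
    have hn : 2 * a + 1 ≤ Fintype.card (Fin n) := by rw [Fintype.card_fin]; omega
    refine (card_le_card_raiseLevel h𝒜 hn).trans (ih _ (h𝒜.raiseLevel fun B hB ↦ (hr B hB).1)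
      hi.raiseLevel fun B hB ↦ ⟨?_, card_le_of_mem_raiseLevel (fun B hB ↦ (hr B hB).2) har hB⟩)
    exact lt_card_of_mem_raiseLevel (fun B hB ↦ (hr B hB).1) hB

theorem card_lt_choose_of_isAntichain_of_intersecting
    (h𝒜 : IsAntichain (· ⊆ ·) (𝒜 : Set (Finset (Fin n))))
    (hi : (𝒜 : Set (Finset (Fin n))).Intersecting) (hr : ∀ A ∈ 𝒜, #A ≤ r) (hrn : r ≤ n / 2)
    {A : Finset (Fin n)} (hA : A ∈ 𝒜) (hAr : #A < r) :
    #𝒜 < (n - 1).choose (r - 1) := by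
  obtain ⟨A₀, hA₀, hmin⟩ := exists_min_image 𝒜 card ⟨A, hA⟩
  have hn : 2 * #A₀ + 2 ≤ Fintype.card (Fin n) := by
    have := hmin A hA
    rw [Fintype.card_fin]; omega
  refine (card_lt_card_raiseLevel h𝒜 hn hA₀ rfl).trans_le
    (card_le_choose_of_isAntichain_of_intersecting (h𝒜.raiseLevel hmin) hi.raiseLevel
      (fun B hB ↦ card_le_of_mem_raiseLevel hr ((hmin A hA).trans_lt hAr) hB) hrn)

end IntersectingAntichain

end Finset

section TwoPartitions

variable {α : Type*} [DecidableEq α] {ℓ : ℕ} {P : Finset (Finset α)}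
  {Sys : Finset (Finset (Finset α))} {A B : Finset α}

def smallClasses (ℓ : ℕ) (Sys : Finset (Finset (Finset α))) : Finset (Finset α) :=
  Sys.biUnion fun P ↦ {A ∈ P | #A ≤ ℓ}

theorem mem_smallClasses : A ∈ smallClasses ℓ Sys ↔ ∃ P ∈ Sys, A ∈ P ∧ #A ≤ ℓ := by
  simp only [smallClasses, mem_biUnion, mem_filter]

theorem card_le_of_mem_smallClasses (hA : A ∈ smallClasses ℓ Sys) : #A ≤ ℓ := by
  obtain ⟨-, -, -, hAℓ⟩ := mem_smallClasses.1 hA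
  exact hAℓ

variable [Fintype α]

theorem IsPartitionInto.eq_pair_compl (hP : IsPartitionInto univ 2 P) (hA : A ∈ P) :
    P = {A, Aᶜ} := by
  obtain ⟨hcard, -, -, huniq⟩ := hP
  obtain ⟨C, D, hCD, rfl⟩ := card_eq_two.1 hcard
  have hD : D = Cᶜ := by
    ext x
    obtain ⟨E, ⟨hE, hxE⟩, hEuniq⟩ := huniq x (mem_univ x)
    rw [mem_compl]
    constructor
    · exact fun hxD hxC ↦ hCD ((hEuniq C ⟨by simp, hxC⟩).trans (hEuniq D ⟨by simp, hxD⟩).symm)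
    · intro hxC
      obtain rfl | rfl : E = C ∨ E = D := by simpa using hE
      · exact absurd hxE hxC
      · exact hxE
  subst hD
  rcases mem_insert.1 hA with rfl | hA
  · rfl
  · rw [mem_singleton.1 hA, compl_compl, pair_comm]

theorem IsPartitionInto.exists_card_le (hα : Fintype.card α = 2 * ℓ + 1)
    (hP : IsPartitionInto univ 2 P) : ∃ A ∈ P, #A ≤ ℓ := by
  obtain ⟨C, hC⟩ : P.Nonempty := card_pos.1 (hP.1 ▸ two_pos)
  by_cases hCℓ : #C ≤ ℓ
  · exact ⟨C, hC, hCℓ⟩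
  · refine ⟨Cᶜ, by rw [hP.eq_pair_compl hC]; simp, ?_⟩
    rw [card_compl]
    omega

theorem IsPartitionInto.eq_of_card_le (hα : Fintype.card α = 2 * ℓ + 1)
    (hP : IsPartitionInto univ 2 P) (hA : A ∈ P) (hB : B ∈ P) (hAℓ : #A ≤ ℓ) (hBℓ : #B ≤ ℓ) :
    A = B := by
  rw [hP.eq_pair_compl hA, mem_insert, mem_singleton] at hB
  rcases hB with rfl | rfl
  · rfl
  · rw [card_compl] at hBℓ
    omega

namespace IsSpernerPartitionSystem

variable (hS : IsSpernerPartitionSystem univ 2 Sys) (hα : Fintype.card α = 2 * ℓ + 1)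
include hS hα

theorem card_smallClasses : #(smallClasses ℓ Sys) = #Sys := by
  rw [smallClasses, card_biUnion fun P hP Q hQ hPQ ↦ disjoint_left.2 fun A hAP hAQ ↦
    hS.2 P hP Q hQ hPQ A (mem_filter.1 hAP).1 A (mem_filter.1 hAQ).1 subset_rfl]
  refine (sum_congr rfl fun P hP ↦ ?_).trans (card_eq_sum_ones Sys).symm
  obtain ⟨A, hA, hAℓ⟩ := (hS.1 P hP).exists_card_le hα
  refine le_antisymm (card_le_one.2 fun B hB C hC ↦ ?_) (card_pos.2 ⟨A, mem_filter.2 ⟨hA, hAℓ⟩⟩)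
  rw [mem_filter] at hB hC
  exact (hS.1 P hP).eq_of_card_le hα hB.1 hC.1 hB.2 hC.2

theorem isAntichain_smallClasses :
    IsAntichain (· ⊆ ·) (smallClasses ℓ Sys : Set (Finset α)) := by
  intro A hA B hB hAB hsub
  obtain ⟨P, hP, hAP, hAℓ⟩ := mem_smallClasses.1 hA
  obtain ⟨Q, hQ, hBQ, hBℓ⟩ := mem_smallClasses.1 hB
  by_cases hPQ : P = Q
  · subst hPQ
    exact hAB ((hS.1 P hP).eq_of_card_le hα hAP hBQ hAℓ hBℓ)
  · exact hS.2 P hP Q hQ hPQ A hAP B hBQ hsub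

theorem intersecting_smallClasses : (smallClasses ℓ Sys : Set (Finset α)).Intersecting := by
  intro A hA B hB hAB
  obtain ⟨P, hP, hAP, hAℓ⟩ := mem_smallClasses.1 hA
  obtain ⟨Q, hQ, hBQ, hBℓ⟩ := mem_smallClasses.1 hB
  by_cases hPQ : P = Q
  · subst hPQ
    obtain rfl := (hS.1 P hP).eq_of_card_le hα hAP hBQ hAℓ hBℓ
    exact ((hS.1 P hP).2.1 A hAP).ne_empty (disjoint_self.1 hAB)
  · have hBc : Bᶜ ∈ Q := by rw [(hS.1 Q hQ).eq_pair_compl hBQ]; simp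
    exact hS.2 P hP Q hQ hPQ A hAP Bᶜ hBc (subset_compl_iff_disjoint_right.2 hAB)

end IsSpernerPartitionSystem

end TwoPartitions

theorem SP_two_odd_extremal_general (ℓ : ℕ)
    (Sys : Finset (Finset (Finset (Fin (2 * ℓ + 1)))))
    (hS : IsSpernerPartitionSystem Finset.univ 2 Sys)
    (hcard : Sys.card = Nat.choose (2 * ℓ) (ℓ - 1)) :
    ∀ P ∈ Sys, ∃ A ∈ P, ∃ B ∈ P, P = {A, B} ∧ A.card = ℓ ∧ B.card = ℓ + 1 := by
  have hα : Fintype.card (Fin (2 * ℓ + 1)) = 2 * ℓ + 1 := Fintype.card_fin _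
  intro P hP
  obtain ⟨A, hAP, hAℓ⟩ := (hS.1 P hP).exists_card_le hα
  have hA : #A = ℓ := by
    by_contra hAne
    have hlt := card_lt_choose_of_isAntichain_of_intersecting (hS.isAntichain_smallClasses hα)
      (hS.intersecting_smallClasses hα) (fun _ ↦ card_le_of_mem_smallClasses)
      (by omega) (mem_smallClasses.2 ⟨P, hP, hAP, hAℓ⟩) (by omega)
    rw [hS.card_smallClasses hα, hcard] at hlt
    exact lt_irrefl _ hlt
  have hP₂ := (hS.1 P hP).eq_pair_compl hAP
  refine ⟨A, hAP, Aᶜ, by rw [hP₂]; simp, hP₂, hA, ?_⟩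
  rw [card_compl, hα]
  omega

theorem SP_two_odd_extremal (ℓ : ℕ) (hℓ : 1 ≤ ℓ)
    (Sys : Finset (Finset (Finset (Fin (2 * ℓ + 1)))))
    (hS : IsSpernerPartitionSystem Finset.univ 2 Sys)
    (hcard : Sys.card = Nat.choose (2 * ℓ) (ℓ - 1)) :
    ∀ P ∈ Sys, ∃ A ∈ P, ∃ B ∈ P, P = {A, B} ∧ A.card = ℓ ∧ B.card = ℓ + 1 :=
  SP_two_odd_extremal_general ℓ Sys hS hcard
end

section
/- There does not exist a Sperner 3-partition system on a 7-element set with six partitions; in fact SP(7, 3) = 5. -/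
open Finset

/-!
Once a Sperner system has two partitions, no class is a singleton, so every `3`-partition of a
`7`-set in it has shape `3 + 2 + 2`; with six partitions this gives `12` distinct pair classes.
Let `p v` count the partitions in which `v` lies in a pair. Removing `v` from its classes leaves
sets with no inclusions among them, and the `6 - p v` triples through `v` become pairs avoiding
the `p v` partners of `v`; hence `6 - p v ≤ C(6 - p v, 2)`, i.e. `p v ∉ {4, 5}`. Every partition
other than that of a pair class `{a, b}` separates `a` from `b` and puts one of them in a pair, so
`p a + p b ≥ 7` and one of them has `p = 6`, i.e. is paired with every other point. So the pair
classes are exactly the pairs meeting the set `D` of such points, and there are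
`21 - C(7 - #D, 2) ≠ 12` of those.
-/

variable {α : Type*} [DecidableEq α] {X : Finset α} {k : ℕ} {P Q : Finset (Finset α)}
  {A B : Finset α} {u v : α}

theorem Finset.eq_pair_of_card_eq_two (hA : #A = 2) (hv : v ∈ A) (hu : u ∈ A) (hvu : v ≠ u) :
    A = {v, u} :=
  (eq_of_subset_of_card_le (insert_subset hv (singleton_subset_iff.2 hu))
    (by rw [hA, card_pair hvu])).symm

theorem Finset.card_filter_not_disjoint_add_choose (X D : Finset α) (n : ℕ) :
    #{e ∈ X.powersetCard n | ¬Disjoint e D} + (#(X \ D)).choose n = (#X).choose n := by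
  have hdisjoint : {e ∈ X.powersetCard n | Disjoint e D} = (X \ D).powersetCard n := by
    ext e
    simp only [mem_filter, mem_powersetCard, subset_sdiff]
    tauto
  rw [← card_powersetCard, ← card_powersetCard, ← hdisjoint, add_comm]
  exact card_filter_add_card_filter_not _

def partOf (P : Finset (Finset α)) (v : α) : Finset α :=
  {A ∈ P | v ∈ A}.sup id

def pairDegree (Sys : Finset (Finset (Finset α))) (v : α) : ℕ :=
  #{P ∈ Sys | #(partOf P v) = 2}

def partners (Sys : Finset (Finset (Finset α))) (v : α) : Finset α :=
  {P ∈ Sys | #(partOf P v) = 2}.biUnion fun P => (partOf P v).erase v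

def pairClasses (Sys : Finset (Finset (Finset α))) : Finset (Finset α) :=
  Sys.biUnion fun P => {A ∈ P | #A = 2}

namespace IsPartitionInto

theorem subset (hP : IsPartitionInto X k P) (hA : A ∈ P) : A ⊆ X :=
  hP.2.2.1 A hA

theorem partOf_eq (hP : IsPartitionInto X k P) (hA : A ∈ P) (hv : v ∈ A) : partOf P v = A := by
  obtain ⟨B, -, hB⟩ := hP.2.2.2 v (hP.subset hA hv)
  have : {A' ∈ P | v ∈ A'} = {A} := by
    ext C
    simp only [mem_filter, mem_singleton]
    exact ⟨fun hC => (hB C hC).trans (hB A ⟨hA, hv⟩).symm, fun h => h ▸ ⟨hA, hv⟩⟩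
  simp [partOf, this]

theorem partOf_mem (hP : IsPartitionInto X k P) (hv : v ∈ X) : partOf P v ∈ P := by
  obtain ⟨A, ⟨hA, hvA⟩, -⟩ := hP.2.2.2 v hv
  rwa [hP.partOf_eq hA hvA]

theorem mem_partOf (hP : IsPartitionInto X k P) (hv : v ∈ X) : v ∈ partOf P v := by
  obtain ⟨A, ⟨hA, hvA⟩, -⟩ := hP.2.2.2 v hv
  rwa [hP.partOf_eq hA hvA]

theorem partOf_subset (hP : IsPartitionInto X k P) (hv : v ∈ X) : partOf P v ⊆ X :=
  hP.subset (hP.partOf_mem hv)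

theorem disjoint (hP : IsPartitionInto X k P) (hA : A ∈ P) (hB : B ∈ P) (hAB : A ≠ B) :
    Disjoint A B :=
  disjoint_left.2 fun _ hvA hvB => hAB ((hP.partOf_eq hA hvA).symm.trans (hP.partOf_eq hB hvB))

theorem sum_card (hP : IsPartitionInto X k P) : ∑ A ∈ P, #A = #X := by
  rw [← card_biUnion fun A hA B hB hAB => hP.disjoint hA hB hAB]
  congr 1
  ext v
  simp only [mem_biUnion]
  exact ⟨fun ⟨A, hA, hv⟩ => hP.subset hA hv,
    fun hv => ⟨_, hP.partOf_mem hv, hP.mem_partOf hv⟩⟩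

theorem of_disjoint (hcard : #P = k) (hne : ∀ A ∈ P, A.Nonempty)
    (hdisj : ∀ A ∈ P, ∀ B ∈ P, A ≠ B → Disjoint A B) (hcover : P.biUnion id = X) :
    IsPartitionInto X k P := by
  refine ⟨hcard, hne, fun A hA => hcover ▸ subset_biUnion_of_mem id hA, fun v hv => ?_⟩
  obtain ⟨A, hA, hvA⟩ := mem_biUnion.1 (hcover ▸ hv)
  refine ⟨A, ⟨hA, hvA⟩, fun B ⟨hB, hvB⟩ => ?_⟩
  by_contra hBA
  exact disjoint_left.1 (hdisj B hB A hA hBA) hvB hvA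

section SevenPoints

variable (hP : IsPartitionInto X 3 P) (hX : #X = 7) (h2 : ∀ A ∈ P, 2 ≤ #A)
include hP hX h2

theorem card_add_card_le_five (hA : A ∈ P) (hB : B ∈ P) (hAB : A ≠ B) : #A + #B ≤ 5 := by
  have hB' : B ∈ P.erase A := mem_erase.2 ⟨hAB.symm, hB⟩
  have hrest : 2 ≤ ∑ C ∈ (P.erase A).erase B, #C := by
    have := card_nsmul_le_sum ((P.erase A).erase B) card 2
      fun C hC => h2 C (mem_of_mem_erase (mem_of_mem_erase hC))
    rwa [card_erase_of_mem hB', card_erase_of_mem hA, hP.1, smul_eq_mul] at this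
  have hsum := hP.sum_card
  rw [← add_sum_erase _ _ hA, ← add_sum_erase _ _ hB'] at hsum
  omega

theorem card_le_three (hA : A ∈ P) : #A ≤ 3 := by
  obtain ⟨B, hB, hBA⟩ := exists_mem_ne (by rw [hP.1]; norm_num) A
  have := hP.card_add_card_le_five hX h2 hA hB hBA.symm
  have := h2 B hB
  omega

theorem card_filter_card_eq_two : #{A ∈ P | #A = 2} = 2 := by
  have hsum := hP.sum_card
  rw [← sum_filter_add_sum_filter_not P (fun A => #A = 2),
    sum_const_nat fun A hA => (mem_filter.1 hA).2, sum_const_nat (m := 3) fun A hA => ?_] at hsum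
  · have := card_filter_add_card_filter_not (s := P) fun A => #A = 2
    omega
  · obtain ⟨hA, hA2⟩ := mem_filter.1 hA
    have := h2 A hA
    have := hP.card_le_three hX h2 hA
    omega

end SevenPoints

end IsPartitionInto

namespace IsSpernerPartitionSystem

variable {Sys : Finset (Finset (Finset α))}

theorem mono {Sys' : Finset (Finset (Finset α))} (hS : IsSpernerPartitionSystem X k Sys)
    (h : Sys' ⊆ Sys) : IsSpernerPartitionSystem X k Sys' :=
  ⟨fun P hP => hS.1 P (h hP), fun P hP Q hQ => hS.2 P (h hP) Q (h hQ)⟩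

section General

variable (hS : IsSpernerPartitionSystem X k Sys)
include hS

theorem isPartitionInto (hP : P ∈ Sys) : IsPartitionInto X k P :=
  hS.1 P hP

theorem partOf_mem (hP : P ∈ Sys) (hv : v ∈ X) : partOf P v ∈ P :=
  (hS.isPartitionInto hP).partOf_mem hv

theorem mem_partOf (hP : P ∈ Sys) (hv : v ∈ X) : v ∈ partOf P v :=
  (hS.isPartitionInto hP).mem_partOf hv

theorem eq_of_subset (hP : P ∈ Sys) (hQ : Q ∈ Sys) (hA : A ∈ P) (hB : B ∈ Q)
    (hAB : A ⊆ B) : P = Q :=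
  by_contra fun hPQ => hS.2 P hP Q hQ hPQ A hA B hB hAB

theorem two_le_card (hSys : 1 < #Sys) (hP : P ∈ Sys) (hA : A ∈ P) : 2 ≤ #A := by
  by_contra! hA1
  obtain ⟨a, ha⟩ := (hS.isPartitionInto hP).2.1 A hA
  obtain ⟨Q, hQ, hQP⟩ := exists_mem_ne hSys P
  have haX : a ∈ X := (hS.isPartitionInto hP).subset hA ha
  have hAsub : A ⊆ partOf Q a := fun b hb => by
    rw [card_le_one.1 (by omega) b hb a ha]; exact hS.mem_partOf hQ haX
  exact hQP (hS.eq_of_subset hP hQ hA (hS.partOf_mem hQ haX) hAsub).symm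

theorem eq_of_partOf_subset (hP : P ∈ Sys) (hQ : Q ∈ Sys) (hv : v ∈ X)
    (h : partOf P v ⊆ partOf Q v) : P = Q :=
  hS.eq_of_subset hP hQ (hS.partOf_mem hP hv) (hS.partOf_mem hQ hv) h

theorem eq_of_erase_partOf_eq (hP : P ∈ Sys) (hQ : Q ∈ Sys) (hv : v ∈ X)
    (h : (partOf P v).erase v = (partOf Q v).erase v) : P = Q := by
  refine hS.eq_of_partOf_subset hP hQ hv (subset_of_eq ?_)
  rw [← insert_erase (hS.mem_partOf hP hv), h, insert_erase (hS.mem_partOf hQ hv)]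

theorem partOf_eq_pair_of_mem_partners (hv : v ∈ X) (hu : u ∈ partners Sys v) :
    ∃ P ∈ Sys, partOf P v = {v, u} := by
  obtain ⟨P, hP, huP⟩ := mem_biUnion.1 hu
  obtain ⟨hP, hP2⟩ := mem_filter.1 hP
  obtain ⟨huv, hu⟩ := mem_erase.1 huP
  exact ⟨P, hP, eq_pair_of_card_eq_two hP2 (hS.mem_partOf hP hv) hu (Ne.symm huv)⟩

theorem partners_subset (hv : v ∈ X) : partners Sys v ⊆ X.erase v := by
  intro u hu
  obtain ⟨P, hP, huP⟩ := mem_biUnion.1 hu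
  exact erase_subset_erase v ((hS.isPartitionInto (mem_filter.1 hP).1).partOf_subset hv) huP

theorem card_partners (hv : v ∈ X) : #(partners Sys v) = pairDegree Sys v := by
  rw [partners, card_biUnion, sum_const_nat, mul_one, pairDegree]
  · intro P hP
    obtain ⟨hP, hP2⟩ := mem_filter.1 hP
    rw [card_erase_of_mem (hS.mem_partOf hP hv), hP2]
    rfl
  · intro P hP Q hQ hPQ
    obtain ⟨hP, hP2⟩ := mem_filter.1 hP
    obtain ⟨hQ, hQ2⟩ := mem_filter.1 hQ
    refine disjoint_left.2 fun u huP huQ => hPQ (hS.eq_of_partOf_subset hP hQ hv ?_)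
    rw [eq_pair_of_card_eq_two hP2 (hS.mem_partOf hP hv) (mem_of_mem_erase huP)
        (mem_erase.1 huP).1.symm,
      eq_pair_of_card_eq_two hQ2 (hS.mem_partOf hQ hv) (mem_of_mem_erase huQ)
        (mem_erase.1 huQ).1.symm]

theorem card_filter_partOf_eq_three_le (hv : v ∈ X) :
    #{P ∈ Sys | #(partOf P v) = 3} ≤ (#X - 1 - pairDegree Sys v).choose 2 := by
  rw [← hS.card_partners hv, ← card_erase_of_mem hv,
    ← card_sdiff_of_subset (hS.partners_subset hv), ← card_powersetCard]
  refine card_le_card_of_injOn (fun P => (partOf P v).erase v) (fun P hP => ?_)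
    (fun P hP Q hQ h => hS.eq_of_erase_partOf_eq (mem_filter.1 hP).1 (mem_filter.1 hQ).1 hv h)
  obtain ⟨hP, hP3⟩ := mem_filter.1 (mem_coe.1 hP)
  rw [mem_coe, mem_powersetCard, card_erase_of_mem (hS.mem_partOf hP hv), hP3]
  refine ⟨fun w hw => mem_sdiff.2
    ⟨erase_subset_erase v ((hS.isPartitionInto hP).partOf_subset hv) hw, fun hw' => ?_⟩, rfl⟩
  obtain ⟨Q, hQ, hQv⟩ := hS.partOf_eq_pair_of_mem_partners hv hw'
  have hQP : Q = P := hS.eq_of_partOf_subset hQ hP hv (by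
    rw [hQv]
    exact insert_subset (hS.mem_partOf hP hv) (singleton_subset_iff.2 (mem_of_mem_erase hw)))
  have hP2 : #(partOf P v) = 2 := by rw [← hQP, hQv, card_pair (mem_erase.1 hw).1.symm]
  omega

end General

section SevenPoints

variable (hS : IsSpernerPartitionSystem X 3 Sys) (hX : #X = 7)
include hS hX

theorem card_partOf_eq_two_or_three (hSys : #Sys = 6) (hP : P ∈ Sys) (hv : v ∈ X) :
    #(partOf P v) = 2 ∨ #(partOf P v) = 3 := by
  have h2 := hS.two_le_card (by omega) hP (hS.partOf_mem hP hv)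
  have := (hS.isPartitionInto hP).card_le_three hX (fun A hA => hS.two_le_card (by omega) hP hA)
    (hS.partOf_mem hP hv)
  omega

theorem pairDegree_le_three_or_eq_six (hSys : #Sys = 6) (hv : v ∈ X) :
    pairDegree Sys v ≤ 3 ∨ pairDegree Sys v = 6 := by
  have hsplit : pairDegree Sys v + #{P ∈ Sys | #(partOf P v) = 3} = 6 := by
    have hthree : {P ∈ Sys | ¬#(partOf P v) = 2} = {P ∈ Sys | #(partOf P v) = 3} :=
      filter_congr fun P hP => by
        have := hS.card_partOf_eq_two_or_three hX hSys hP hv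
        omega
    rw [pairDegree, ← hthree, card_filter_add_card_filter_not, hSys]
  have hlink := hS.card_filter_partOf_eq_three_le hv
  generalize #{P ∈ Sys | #(partOf P v) = 3} = t at hsplit hlink
  rw [hX, show 7 - 1 - pairDegree Sys v = t by omega] at hlink
  have : t ≠ 1 ∧ t ≠ 2 :=
    ⟨by rintro rfl; exact absurd hlink (by decide),
      by rintro rfl; exact absurd hlink (by decide)⟩
  omega

theorem seven_le_pairDegree_add {a b : α} (hSys : #Sys = 6) (hP : P ∈ Sys) (hA : A ∈ P)
    (hA2 : #A = 2) (ha : a ∈ A) (hb : b ∈ A) (hab : a ≠ b) :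
    7 ≤ pairDegree Sys a + pairDegree Sys b := by
  have haX := (hS.isPartitionInto hP).subset hA ha
  have hbX := (hS.isPartitionInto hP).subset hA hb
  have hunion : {Q ∈ Sys | #(partOf Q a) = 2} ∪ {Q ∈ Sys | #(partOf Q b) = 2} = Sys := by
    rw [filter_union_right]
    refine filter_true_of_mem fun Q hQ => ?_
    by_cases hQP : Q = P
    · left
      rw [hQP, (hS.isPartitionInto hP).partOf_eq hA ha, hA2]
    have hsep : partOf Q a ≠ partOf Q b := by
      intro h
      refine hQP (hS.eq_of_subset hP hQ hA (hS.partOf_mem hQ haX) ?_).symm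
      rw [eq_pair_of_card_eq_two hA2 ha hb hab, h]
      exact insert_subset (h ▸ hS.mem_partOf hQ haX)
        (singleton_subset_iff.2 (hS.mem_partOf hQ hbX))
    have := (hS.isPartitionInto hQ).card_add_card_le_five hX
      (fun A hA => hS.two_le_card (by omega) hQ hA)
      (hS.partOf_mem hQ haX) (hS.partOf_mem hQ hbX) hsep
    have := hS.card_partOf_eq_two_or_three hX hSys hQ haX
    have := hS.card_partOf_eq_two_or_three hX hSys hQ hbX
    omega
  have hinter : P ∈ {Q ∈ Sys | #(partOf Q a) = 2} ∩ {Q ∈ Sys | #(partOf Q b) = 2} := by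
    simp only [mem_inter, mem_filter, (hS.isPartitionInto hP).partOf_eq hA ha,
      (hS.isPartitionInto hP).partOf_eq hA hb, hA2, hP, and_self]
  have := card_union_add_card_inter {Q ∈ Sys | #(partOf Q a) = 2} {Q ∈ Sys | #(partOf Q b) = 2}
  rw [hunion, hSys] at this
  have := card_pos.2 ⟨P, hinter⟩
  unfold pairDegree
  omega

theorem card_pairClasses (hSys : #Sys = 6) : #(pairClasses Sys) = 12 := by
  rw [pairClasses, card_biUnion,
    sum_const_nat fun P hP => (hS.isPartitionInto hP).card_filter_card_eq_two hX
    fun A hA => hS.two_le_card (by omega) hP hA, hSys]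
  intro P hP Q hQ hPQ
  refine disjoint_left.2 fun A hAP hAQ => hPQ ?_
  exact hS.eq_of_subset hP hQ (mem_filter.1 hAP).1 (mem_filter.1 hAQ).1 subset_rfl

theorem pair_mem_pairClasses (hv : v ∈ X) (h6 : pairDegree Sys v = 6) (hu : u ∈ X)
    (huv : u ≠ v) : {v, u} ∈ pairClasses Sys := by
  have hpartners : partners Sys v = X.erase v :=
    eq_of_subset_of_card_le (hS.partners_subset hv)
      (by rw [hS.card_partners hv, h6, card_erase_of_mem hv, hX])
  obtain ⟨P, hP, hPv⟩ :=
    hS.partOf_eq_pair_of_mem_partners hv (hpartners ▸ mem_erase.2 ⟨huv, hu⟩)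
  exact mem_biUnion.2 ⟨P, hP, mem_filter.2
    ⟨hPv ▸ hS.partOf_mem hP hv, hPv ▸ card_pair huv.symm⟩⟩

theorem pairClasses_eq (hSys : #Sys = 6) :
    pairClasses Sys = {e ∈ X.powersetCard 2 | ¬Disjoint e {v ∈ X | pairDegree Sys v = 6}} := by
  ext e
  constructor
  · intro he
    obtain ⟨P, hP, heP⟩ := mem_biUnion.1 he
    obtain ⟨heP, he2⟩ := mem_filter.1 heP
    obtain ⟨a, b, hab, rfl⟩ := card_eq_two.1 he2
    have ha : a ∈ ({a, b} : Finset α) := mem_insert_self a {b}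
    have hb : b ∈ ({a, b} : Finset α) := mem_insert_of_mem (mem_singleton_self b)
    have heX := (hS.isPartitionInto hP).subset heP
    have := hS.seven_le_pairDegree_add hX hSys hP heP he2 ha hb hab
    have := hS.pairDegree_le_three_or_eq_six hX hSys (heX ha)
    have := hS.pairDegree_le_three_or_eq_six hX hSys (heX hb)
    refine mem_filter.2 ⟨mem_powersetCard.2 ⟨heX, he2⟩, not_disjoint_iff.2 ?_⟩
    by_cases h6 : pairDegree Sys a = 6
    · exact ⟨a, ha, mem_filter.2 ⟨heX ha, h6⟩⟩
    · exact ⟨b, hb, mem_filter.2 ⟨heX hb, by omega⟩⟩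
  · intro he
    obtain ⟨he, heD⟩ := mem_filter.1 he
    obtain ⟨heX, he2⟩ := mem_powersetCard.1 he
    obtain ⟨d, hde, hdD⟩ := not_disjoint_iff.1 heD
    obtain ⟨hdX, hd6⟩ := mem_filter.1 hdD
    obtain ⟨u, hu⟩ : (e.erase d).Nonempty := by
      rw [← card_pos, card_erase_of_mem hde, he2]
      norm_num
    obtain ⟨hud, hue⟩ := mem_erase.1 hu
    rw [eq_pair_of_card_eq_two he2 hde hue hud.symm]
    exact hS.pair_mem_pairClasses hX hdX hd6 (heX hue) hud

theorem card_ne_six : #Sys ≠ 6 := by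
  intro hSys
  have hcount := card_filter_not_disjoint_add_choose X {v ∈ X | pairDegree Sys v = 6} 2
  rw [← hS.pairClasses_eq hX hSys, hS.card_pairClasses hX hSys, hX] at hcount
  have hrest : #(X \ {v ∈ X | pairDegree Sys v = 6}) ≤ 7 := hX ▸ card_le_card sdiff_subset
  generalize #(X \ {v ∈ X | pairDegree Sys v = 6}) = d at hcount hrest
  interval_cases d <;> simp [Nat.choose] at hcount

theorem card_le_five : #Sys ≤ 5 := by
  by_contra! h
  obtain ⟨Sys', hSys', h6⟩ := exists_subset_card_eq (show 6 ≤ #Sys by omega)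
  exact (hS.mono hSys').card_ne_six hX h6

end SevenPoints

end IsSpernerPartitionSystem

/- The triples are `{0, 1, j}`; the pairs form a near-one-factorization of `K₅` on
`{2, …, 6}`, so they are distinct and none lies in a triple. -/
def fivePartitions : Finset (Finset (Finset (Fin 7))) :=
  { {{0, 1, 2}, {3, 4}, {5, 6}}, {{0, 1, 3}, {2, 5}, {4, 6}}, {{0, 1, 4}, {2, 6}, {3, 5}},
    {{0, 1, 5}, {2, 4}, {3, 6}}, {{0, 1, 6}, {2, 3}, {4, 5}} }

theorem isSpernerPartitionSystem_fivePartitions :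
    IsSpernerPartitionSystem univ 3 fivePartitions := by
  refine ⟨?_, ?_⟩ <;> simp only [fivePartitions, mem_insert, mem_singleton, forall_eq_or_imp,
    forall_eq]
  · refine ⟨?_, ?_, ?_, ?_, ?_⟩ <;> apply IsPartitionInto.of_disjoint <;>
      set_option maxRecDepth 4000 in decide
  · and_intros <;> first | exact fun h => absurd rfl h | exact fun _ => by decide

theorem SP_seven_three :
    (¬ ∃ Sys : Finset (Finset (Finset (Fin 7))),
      IsSpernerPartitionSystem Finset.univ 3 Sys ∧ Sys.card = 6) ∧
    SP 7 3 = 5 := by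
  refine ⟨fun ⟨Sys, hS, h6⟩ => hS.card_ne_six (card_fin 7) h6, ?_⟩
  refine IsGreatest.csSup_eq
    ⟨⟨fivePartitions, isSpernerPartitionSystem_fivePartitions, rfl⟩, ?_⟩
  rintro m ⟨Sys, hS, rfl⟩
  exact hS.card_le_five (card_fin 7)
end

section
/- For every integer k > 2, there exists a Sperner k-partition system on a (2k+2)-element set with 2k+1 partitions; consequently SP(2k+2, k) ≥ 2k+1. -/
open Finset

/-!
Label the points of `ZMod (2k+1) ∪ {∞}` by `∞ ↦ 1`, `0 ↦ 2` and `x ↦ |x|` (least absolute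
residue) otherwise. The fibres of the label are `{∞, ±1}`, `{0, ±2}` and `{±i}` for `3 ≤ i ≤ k`,
a `k`-partition, and its `2k+1` translates form a Sperner system. Every class of the translate by
`s` contains a pair `{s + c, s - c}` with `c ≠ 0`. The translate by `t ≠ s` puts two points in one
class only if they are symmetric about `t`, which `s ± c` are not, or if they are `t` and `t ± 2`.
In that case `c = ±1`, so the class of `s` contains `∞` while the class of `t` containing `t` does
not.
-/

section Transport

variable {α β : Type*} [DecidableEq α] [DecidableEq β] {X : Finset α} {k : ℕ}

theorem IsPartitionInto.map (e : α ↪ β) {P : Finset (Finset α)} (h : IsPartitionInto X k P) :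
    IsPartitionInto (X.map e) k (P.map (mapEmbedding e).toEmbedding) := by
  obtain ⟨hcard, hne, hsub, huniq⟩ := h
  refine ⟨by rw [card_map, hcard], ?_, ?_, ?_⟩
  · simp only [mem_map, RelEmbedding.coe_toEmbedding, mapEmbedding_apply]
    rintro _ ⟨A, hA, rfl⟩
    exact (hne A hA).map
  · simp only [mem_map, RelEmbedding.coe_toEmbedding, mapEmbedding_apply]
    rintro _ ⟨A, hA, rfl⟩
    exact map_subset_map.2 (hsub A hA)
  · simp only [mem_map, RelEmbedding.coe_toEmbedding, mapEmbedding_apply]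
    rintro _ ⟨x, hx, rfl⟩
    obtain ⟨A, ⟨hA, hxA⟩, hAuniq⟩ := huniq x hx
    refine ⟨A.map e, ⟨⟨A, hA, rfl⟩, mem_map_of_mem e hxA⟩, ?_⟩
    rintro _ ⟨⟨B, hB, rfl⟩, hxB⟩
    rw [hAuniq B ⟨hB, (mem_map' e).1 hxB⟩]

theorem IsSpernerPartitionSystem.map (e : α ↪ β) {Sys : Finset (Finset (Finset α))}
    (h : IsSpernerPartitionSystem X k Sys) :
    IsSpernerPartitionSystem (X.map e) k
      (Sys.map (mapEmbedding (mapEmbedding e).toEmbedding).toEmbedding) := by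
  obtain ⟨hpart, hsperner⟩ := h
  simp only [IsSpernerPartitionSystem, mem_map, RelEmbedding.coe_toEmbedding,
    mapEmbedding_apply]
  refine ⟨?_, ?_⟩
  · rintro _ ⟨P, hP, rfl⟩
    exact (hpart P hP).map e
  · rintro _ ⟨P, hP, rfl⟩ _ ⟨Q, hQ, rfl⟩ hPQ _ hA' _ hB'
    obtain ⟨A, hA, rfl⟩ := mem_map.1 hA'
    obtain ⟨B, hB, rfl⟩ := mem_map.1 hB'
    rw [RelEmbedding.coe_toEmbedding, mapEmbedding_apply, mapEmbedding_apply, map_subset_map]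
    exact hsperner P hP Q hQ (fun h ↦ hPQ (h ▸ rfl)) A hA B hB

end Transport

theorem le_SP {n k : ℕ} {Sys : Finset (Finset (Finset (Fin n)))}
    (h : IsSpernerPartitionSystem univ k Sys) : Sys.card ≤ SP n k := by
  refine le_csSup ⟨Fintype.card (Finset (Finset (Fin n))), ?_⟩ ⟨Sys, h, rfl⟩
  rintro _ ⟨Sys', -, rfl⟩
  exact card_le_univ Sys'

theorem exists_isSpernerPartitionSystem_fin {α : Type*} [Fintype α] [DecidableEq α] {n k : ℕ}
    (hα : Fintype.card α = n) {Sys : Finset (Finset (Finset α))}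
    (h : IsSpernerPartitionSystem univ k Sys) :
    ∃ Sys' : Finset (Finset (Finset (Fin n))),
      IsSpernerPartitionSystem univ k Sys' ∧ Sys'.card = Sys.card := by
  have := h.map (Fintype.equivFinOfCardEq hα).toEmbedding
  rw [map_univ_equiv] at this
  exact ⟨_, this, card_map _⟩

theorem isPartitionInto_image_filter {α β : Type*} [DecidableEq α] [DecidableEq β]
    {X : Finset α} {S : Finset β} {f : α → β} (hmaps : Set.MapsTo f X S)
    (hsurj : Set.SurjOn f X S) :
    IsPartitionInto X S.card (S.image fun b ↦ X.filter (f · = b)) := by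
  refine ⟨card_image_of_injOn ?_, ?_, ?_, ?_⟩
  · intro b hb b' _ hbb'
    obtain ⟨x, hx, rfl⟩ := hsurj hb
    have hx' : x ∈ X.filter (f · = b') := by
      rw [← show X.filter (f · = f x) = X.filter (f · = b') from hbb']
      exact mem_filter.2 ⟨hx, rfl⟩
    exact (mem_filter.1 hx').2
  · simp only [mem_image]
    rintro _ ⟨b, hb, rfl⟩
    obtain ⟨x, hx, rfl⟩ := hsurj hb
    exact ⟨x, mem_filter.2 ⟨hx, rfl⟩⟩
  · simp only [mem_image]
    rintro _ ⟨b, -, rfl⟩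
    exact filter_subset _ _
  · intro x hx
    refine ⟨X.filter (f · = f x), ⟨mem_image_of_mem _ (hmaps hx), mem_filter.2 ⟨hx, rfl⟩⟩, ?_⟩
    rintro _ ⟨hB, hxB⟩
    obtain ⟨b, -, rfl⟩ := mem_image.1 hB
    rw [(mem_filter.1 hxB).2]

section Cyclic

variable {k : ℕ}

def cyclicLabel (k : ℕ) : Option (ZMod (2 * k + 1)) → ℕ
  | none => 1
  | some x => if x = 0 then 2 else x.valMinAbs.natAbs

theorem isUnit_two_zmod_two_mul_add_one : IsUnit (2 : ZMod (2 * k + 1)) := by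
  simpa using (ZMod.isUnit_iff_coprime 2 (2 * k + 1)).2
    (Nat.coprime_two_left.2 (odd_two_mul_add_one k))

theorem natCast_ne_zero_of_mem_Icc {a : ℕ} (ha : a ∈ Icc 1 k) : (a : ZMod (2 * k + 1)) ≠ 0 := by
  rw [mem_Icc] at ha
  rw [Ne, ZMod.natCast_eq_zero_iff]
  exact Nat.not_dvd_of_pos_of_lt (by omega) (by omega)

theorem cyclicLabel_some_natCast {a : ℕ} (ha : a ∈ Icc 1 k) :
    cyclicLabel k (some (a : ZMod (2 * k + 1))) = a := by
  have ha' : a ≤ (2 * k + 1) / 2 := by rw [mem_Icc] at ha; omega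
  simp [cyclicLabel, natCast_ne_zero_of_mem_Icc ha, ZMod.valMinAbs_natCast_of_le_half ha']

theorem cyclicLabel_some_neg (x : ZMod (2 * k + 1)) :
    cyclicLabel k (some (-x)) = cyclicLabel k (some x) := by
  simp [cyclicLabel]

theorem cyclicLabel_mem_Icc (hk : 2 ≤ k) (x : Option (ZMod (2 * k + 1))) :
    cyclicLabel k x ∈ Icc 1 k := by
  rw [mem_Icc]
  rcases x with _ | x
  · simp only [cyclicLabel]; omega
  · by_cases hx : x = 0
    · simp only [cyclicLabel, hx, if_true]; omega
    · have hle := ZMod.natAbs_valMinAbs_le x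
      have hpos : x.valMinAbs.natAbs ≠ 0 := by simpa using hx
      simp only [cyclicLabel, hx, if_false]
      omega

theorem eq_or_add_eq_zero_of_cyclicLabel_eq (hk : 2 ≤ k) {x y : ZMod (2 * k + 1)}
    (h : cyclicLabel k (some x) = cyclicLabel k (some y)) :
    x = y ∨ x + y = 0 ∨ cyclicLabel k (some x) = 2 ∧ (x - y = 2 ∨ y - x = 2) := by
  have hlabel_two : cyclicLabel k (some 2) = 2 := by
    exact_mod_cast cyclicLabel_some_natCast (k := k) (a := 2) (mem_Icc.2 ⟨by omega, hk⟩)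
  have hlabel_zero : cyclicLabel k (some 0) = 2 := by simp [cyclicLabel]
  have eq_two_or_neg_two : ∀ {z : ZMod (2 * k + 1)}, z ≠ 0 → cyclicLabel k (some z) = 2 →
      z = 2 ∨ z = -2 := by
    intro z hz hz2
    have hne : (2 : ZMod (2 * k + 1)) ≠ 0 := by
      simpa using natCast_ne_zero_of_mem_Icc (k := k) (a := 2) (mem_Icc.2 ⟨by omega, hk⟩)
    simp only [cyclicLabel, hz, hne, if_false] at hz2 hlabel_two
    exact (ZMod.natAbs_valMinAbs_eq_natAbs_valMinAbs).1 (hz2.trans hlabel_two.symm)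
  by_cases hx : x = 0 <;> by_cases hy : y = 0
  · exact Or.inl (hx.trans hy.symm)
  · subst hx
    refine Or.inr (Or.inr ⟨hlabel_zero, ?_⟩)
    rcases eq_two_or_neg_two hy (h ▸ hlabel_zero) with rfl | rfl
    · exact Or.inr (sub_zero _)
    · exact Or.inl (zero_sub _ |>.trans (neg_neg _))
  · subst hy
    refine Or.inr (Or.inr ⟨h.trans hlabel_zero, ?_⟩)
    rcases eq_two_or_neg_two hx (h.trans hlabel_zero) with rfl | rfl
    · exact Or.inl (sub_zero _)
    · exact Or.inr (zero_sub _ |>.trans (neg_neg _))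
  · simp only [cyclicLabel, hx, hy, if_false] at h
    rcases (ZMod.natAbs_valMinAbs_eq_natAbs_valMinAbs).1 h with h | h
    · exact Or.inl h
    · exact Or.inr (Or.inl (by rw [h, neg_add_cancel]))

def cyclicPartition (k : ℕ) (t : ZMod (2 * k + 1)) : Finset (Finset (Option (ZMod (2 * k + 1)))) :=
  (Icc 1 k).image fun b ↦ univ.filter fun x ↦ cyclicLabel k (x.map (· - t)) = b

theorem isPartitionInto_cyclicPartition (hk : 2 ≤ k) (t : ZMod (2 * k + 1)) :
    IsPartitionInto univ k (cyclicPartition k t) := by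
  let f (x : Option (ZMod (2 * k + 1))) : ℕ := cyclicLabel k (x.map (· - t))
  have hmaps : Set.MapsTo f ↑(univ : Finset (Option (ZMod (2 * k + 1)))) ↑(Icc 1 k) :=
    fun x _ ↦ cyclicLabel_mem_Icc hk _
  have hsurj : Set.SurjOn f ↑(univ : Finset (Option (ZMod (2 * k + 1)))) ↑(Icc 1 k) :=
    fun b hb ↦ ⟨some (b + t), mem_coe.2 (mem_univ _), by
      simpa only [f, Option.map_some, add_sub_cancel_right] using cyclicLabel_some_natCast hb⟩
  have h := isPartitionInto_image_filter hmaps hsurj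
  rwa [Nat.card_Icc, Nat.add_sub_cancel] at h

theorem not_subset_of_mem_cyclicPartition (hk : 2 ≤ k) {s t : ZMod (2 * k + 1)} (hst : s ≠ t)
    {A B : Finset (Option (ZMod (2 * k + 1)))} (hA : A ∈ cyclicPartition k s)
    (hB : B ∈ cyclicPartition k t) : ¬ A ⊆ B := by
  obtain ⟨a, ha, rfl⟩ := mem_image.1 hA
  obtain ⟨b, -, rfl⟩ := mem_image.1 hB
  intro hAB
  have hmem : ∀ x : Option (ZMod (2 * k + 1)),
      cyclicLabel k (x.map (· - s)) = a → cyclicLabel k (x.map (· - t)) = b :=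
    fun x hx ↦ (mem_filter.1 (hAB (mem_filter.2 ⟨mem_univ _, hx⟩))).2
  set c : ZMod (2 * k + 1) := (a : ZMod (2 * k + 1))
  have hc : cyclicLabel k (some c) = a := cyclicLabel_some_natCast ha
  have hplus := hmem (some (s + c)) (by simpa using hc)
  have hminus := hmem (some (s - c)) (by simpa [cyclicLabel_some_neg] using hc)
  simp only [Option.map_some] at hplus hminus
  have cancel_two := isUnit_two_zmod_two_mul_add_one (k := k)
  rcases eq_or_add_eq_zero_of_cyclicLabel_eq hk (hplus.trans hminus.symm) with h | h | ⟨h2, h⟩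
  · refine natCast_ne_zero_of_mem_Icc ha (cancel_two.mul_left_cancel ?_)
    linear_combination h
  · exact hst (sub_eq_zero.1 (cancel_two.mul_left_cancel (by linear_combination h)))
  · have hc1 : c = 1 ∨ c = -1 := by
      rcases h with h | h
      · exact Or.inl (cancel_two.mul_left_cancel (by linear_combination h))
      · exact Or.inr (cancel_two.mul_left_cancel (by linear_combination -h))
    have ha1 : a = 1 := by
      have hlabel_one : cyclicLabel k (some 1) = 1 := by
        exact_mod_cast cyclicLabel_some_natCast (k := k) (a := 1) (mem_Icc.2 ⟨le_rfl, by omega⟩)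
      rcases hc1 with h1 | h1
      · rw [← hc, h1, hlabel_one]
      · rw [← hc, h1, cyclicLabel_some_neg, hlabel_one]
    have hb : 1 = b := hmem none ha1.symm
    omega

theorem cyclicPartition_injective (hk : 2 ≤ k) : Function.Injective (cyclicPartition k) := by
  intro s t hst
  by_contra hne
  obtain ⟨A, hA⟩ : (cyclicPartition k s).Nonempty := by
    rw [← card_pos, (isPartitionInto_cyclicPartition hk s).1]
    omega
  exact not_subset_of_mem_cyclicPartition hk hne hA (hst ▸ hA) subset_rfl

theorem isSpernerPartitionSystem_image_cyclicPartition (hk : 2 ≤ k) :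
    IsSpernerPartitionSystem univ k (univ.image (cyclicPartition k)) := by
  refine ⟨?_, ?_⟩
  · rintro _ hP
    obtain ⟨t, -, rfl⟩ := mem_image.1 hP
    exact isPartitionInto_cyclicPartition hk t
  · rintro _ hP _ hQ hPQ A hA B hB
    obtain ⟨s, -, rfl⟩ := mem_image.1 hP
    obtain ⟨t, -, rfl⟩ := mem_image.1 hQ
    exact not_subset_of_mem_cyclicPartition hk (fun h ↦ hPQ (congrArg _ h)) hA hB

theorem card_image_cyclicPartition (hk : 2 ≤ k) :
    (univ.image (cyclicPartition k)).card = 2 * k + 1 := by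
  rw [card_image_of_injective _ (cyclicPartition_injective hk), card_univ, ZMod.card]

end Cyclic

theorem SP_two_k_add_two_lower (k : ℕ) (hk : 2 < k) :
    (∃ Sys : Finset (Finset (Finset (Fin (2 * k + 2)))),
      IsSpernerPartitionSystem Finset.univ k Sys ∧ Sys.card = 2 * k + 1) ∧
    2 * k + 1 ≤ SP (2 * k + 2) k := by
  have hk2 : 2 ≤ k := hk.le
  have hcard : Fintype.card (Option (ZMod (2 * k + 1))) = 2 * k + 2 := by simp
  obtain ⟨Sys, hSys, hSys_card⟩ :=
    exists_isSpernerPartitionSystem_fin hcard (isSpernerPartitionSystem_image_cyclicPartition hk2)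
  rw [card_image_cyclicPartition hk2] at hSys_card
  exact ⟨⟨Sys, hSys, hSys_card⟩, hSys_card ▸ le_SP hSys⟩
end

section
/- For all integers k ≥ 1 and ℓ ≥ 1, SP(ℓk, k) = C(ℓk - 1, ℓ - 1); moreover, a Sperner k-partition system on an (ℓk)-element set achieves this bound only if every class of every partition in the system has exactly ℓ elements. -/
open Finset

/-!
Write `n = ℓk`. Upper bound: the classes of all partitions in a Sperner system form an antichain,
so by the LYM inequality the sum of `1 / C(n, |A|)` over all classes `A` is at most `1`. As
`c ↦ 1 / C(n, c)` is strictly convex and the class sizes of a `k`-partition average to `ℓ`, each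
partition contributes at least `k / C(n, ℓ) = 1 / C(n - 1, ℓ - 1)`, with equality only if all its
classes have size `ℓ`.

Lower bound: by Baranyai's theorem the `ℓ`-subsets of an `n`-set split into `C(n - 1, ℓ - 1)`
partitions into `ℓ`-sets, and two of them never share a class. Baranyai's theorem is proved by
adding the points one at a time while keeping `C(n - 1, ℓ - 1)` rows of `k` labelled parts in
which every set `S` of at most `ℓ` of the points added so far occurs as a part exactly
`C(r, ℓ - |S|)` times, `r` being the number of points still to come; Hall's theorem decides
which part of each row receives the next point.
-/

theorem Nat.mul_choose_sub_one_sub_one {ℓ k : ℕ} (hℓ : 0 < ℓ) :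
    k * (ℓ * k - 1).choose (ℓ - 1) = (ℓ * k).choose ℓ := by
  rcases Nat.eq_zero_or_pos k with rfl | hk
  · simp [Nat.choose_eq_zero_of_lt hℓ]
  obtain ⟨a, rfl⟩ : ∃ a, ℓ = a + 1 := ⟨ℓ - 1, by omega⟩
  obtain ⟨m, hm⟩ : ∃ m, (a + 1) * k = m + 1 :=
    ⟨(a + 1) * k - 1, by have := Nat.mul_pos hℓ hk; omega⟩
  rw [hm, Nat.add_sub_cancel, Nat.add_sub_cancel]
  refine Nat.eq_of_mul_eq_mul_left (Nat.succ_pos a) ?_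
  calc (a + 1) * (k * m.choose a) = (m + 1) * m.choose a := by rw [← hm]; ring
    _ = (a + 1) * (m + 1).choose (a + 1) := by rw [Nat.add_one_mul_choose_eq, mul_comm]

theorem Nat.add_one_choose_mul {r m : ℕ} :
    (r + 1).choose m * m = (r + 1) * ((r + 1).choose m - r.choose m) := by
  cases m with
  | zero => simp
  | succ m => rw [← Nat.add_one_mul_choose_eq, Nat.choose_succ_succ', Nat.add_sub_cancel_right]

section DiscreteConvexity

variable {g : ℕ → ℚ} {n ℓ : ℕ} {β : Type*} {s : Finset β} {w : β → ℕ}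

theorem increment_le_increment (hg : ∀ c, c + 2 ≤ n → g (c + 1) - g c < g (c + 2) - g (c + 1))
    {i j : ℕ} (hij : i ≤ j) (hj : j + 1 ≤ n) : g (i + 1) - g i ≤ g (j + 1) - g j := by
  induction j, hij using Nat.le_induction with
  | base => rfl
  | succ j _ ih => exact (ih (by omega)).trans (hg j (by omega)).le

theorem secant_le (hg : ∀ c, c + 2 ≤ n → g (c + 1) - g c < g (c + 2) - g (c + 1))
    {m c : ℕ} (hm : m + 1 ≤ n) (hc : c ≤ n) : g m + (c - m) * (g (m + 1) - g m) ≤ g c := by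
  rcases le_total m c with hmc | hcm
  · induction c, hmc using Nat.le_induction with
    | base => simp
    | succ c hmc ih =>
      have := increment_le_increment hg hmc (by omega)
      push_cast
      linarith [ih (by omega)]
  · obtain ⟨d, rfl⟩ := Nat.exists_eq_add_of_le hcm
    clear hcm hc
    induction d generalizing c with
    | zero => simp
    | succ d ih =>
      have := increment_le_increment hg (i := c) (j := c + (d + 1)) (by omega) hm
      have := ih (c := c + 1) (by omega)
      rw [show c + 1 + d = c + (d + 1) by omega] at this
      push_cast at this ⊢
      linarith

theorem supporting_line_lt (hg : ∀ c, c + 2 ≤ n → g (c + 1) - g c < g (c + 2) - g (c + 1))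
    {c : ℕ} (hℓ : 0 < ℓ) (hℓn : ℓ < n) (hc : c ≤ n) (hcℓ : c ≠ ℓ) :
    g ℓ + (c - ℓ) * ((g (ℓ + 1) - g (ℓ - 1)) / 2) < g c := by
  obtain ⟨m, rfl⟩ : ∃ m, ℓ = m + 1 := ⟨ℓ - 1, by omega⟩
  have hgm := hg m (by omega)
  rw [Nat.add_sub_cancel]
  rcases lt_or_gt_of_ne hcℓ with hlt | hgt
  · have := secant_le hg (m := m) (by omega) hc
    have hcm : (c : ℚ) ≤ m := by exact_mod_cast (by omega : c ≤ m)
    push_cast at *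
    nlinarith
  · have := secant_le hg (m := m + 1) (by omega) hc
    have hcm : (m : ℚ) + 2 ≤ c := by exact_mod_cast (by omega : m + 2 ≤ c)
    push_cast at *
    nlinarith

theorem card_mul_lt_sum_of_ne (hg : ∀ c, c + 2 ≤ n → g (c + 1) - g c < g (c + 2) - g (c + 1))
    (hw : ∀ b ∈ s, w b ≤ n) (hsum : ∑ b ∈ s, w b = #s * ℓ) {b₀ : β}
    (hb₀ : b₀ ∈ s) (hne : w b₀ ≠ ℓ) : #s * g ℓ < ∑ b ∈ s, g (w b) := by
  have hsum_const : ∑ b ∈ s, w b = ∑ _b ∈ s, ℓ := by rw [hsum, sum_const, smul_eq_mul]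
  obtain ⟨b₁, hb₁, hlt₁⟩ : ∃ b ∈ s, w b < ℓ := by
    by_contra! h
    exact (sum_lt_sum h ⟨b₀, hb₀, lt_of_le_of_ne (h b₀ hb₀) hne.symm⟩).ne' hsum_const
  obtain ⟨b₂, hb₂, hlt₂⟩ : ∃ b ∈ s, ℓ < w b := by
    by_contra! h
    exact (sum_lt_sum h ⟨b₀, hb₀, lt_of_le_of_ne (h b₀ hb₀) hne⟩).ne hsum_const
  set σ := (g (ℓ + 1) - g (ℓ - 1)) / 2
  have hline : ∀ b ∈ s, g ℓ + (w b - ℓ) * σ ≤ g (w b) := by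
    intro b hb
    rcases eq_or_ne (w b) ℓ with h | h
    · simp [h]
    · exact (supporting_line_lt hg (by omega) (by linarith [hw b₂ hb₂]) (hw b hb) h).le
  have hstrict := supporting_line_lt hg (by omega) (by linarith [hw b₂ hb₂]) (hw b₀ hb₀) hne
  have hmean : ∑ b ∈ s, ((w b : ℚ) - ℓ) = 0 := by
    have hsumℚ : ∑ b ∈ s, (w b : ℚ) = #s * ℓ := by exact_mod_cast hsum
    rw [sum_sub_distrib, sum_const, nsmul_eq_mul, hsumℚ, sub_self]
  calc (#s : ℚ) * g ℓ = ∑ b ∈ s, (g ℓ + (w b - ℓ) * σ) := by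
        rw [sum_add_distrib, ← sum_mul, hmean]; simp
    _ < ∑ b ∈ s, g (w b) := sum_lt_sum hline ⟨b₀, hb₀, hstrict⟩

theorem card_mul_le_sum (hg : ∀ c, c + 2 ≤ n → g (c + 1) - g c < g (c + 2) - g (c + 1))
    (hw : ∀ b ∈ s, w b ≤ n) (hsum : ∑ b ∈ s, w b = #s * ℓ) :
    #s * g ℓ ≤ ∑ b ∈ s, g (w b) := by
  by_cases h : ∃ b ∈ s, w b ≠ ℓ
  · obtain ⟨b₀, hb₀, hne⟩ := h
    exact (card_mul_lt_sum_of_ne hg hw hsum hb₀ hne).le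
  · push Not at h
    simp [sum_congr rfl fun b hb => congrArg g (h b hb)]

end DiscreteConvexity

theorem inv_choose_increment_lt {n c : ℕ} (h : c + 2 ≤ n) :
    ((n.choose (c + 1) : ℚ))⁻¹ - (n.choose c : ℚ)⁻¹
      < (n.choose (c + 2) : ℚ)⁻¹ - (n.choose (c + 1) : ℚ)⁻¹ := by
  obtain ⟨t, rfl⟩ := Nat.exists_eq_add_of_le h
  simp only [Nat.cast_choose ℚ (by omega : c ≤ c + 2 + t),
    Nat.cast_choose ℚ (by omega : c + 1 ≤ c + 2 + t),
    Nat.cast_choose ℚ (by omega : c + 2 ≤ c + 2 + t), inv_div]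
  rw [show c + 2 + t - c = t + 2 by omega, show c + 2 + t - (c + 1) = t + 1 by omega,
    show c + 2 + t - (c + 2) = t by omega]
  have hN : (0 : ℚ) < (c + 2 + t).factorial := by positivity
  rw [div_sub_div_same, div_sub_div_same, div_lt_div_iff_of_pos_right hN]
  simp only [Nat.factorial_succ]
  push_cast
  have hc : (0 : ℚ) < c.factorial := by positivity
  have ht : (0 : ℚ) < t.factorial := by positivity
  -- divided by `c! * t!`, the claim reads `(c - t) ^ 2 + c + t + 2 > 0`
  nlinarith [mul_pos hc ht, mul_nonneg (mul_pos hc ht).le (sq_nonneg ((c : ℚ) - t))]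

section Partition

variable {α : Type*} [DecidableEq α] {X : Finset α} {k : ℕ} {P : Finset (Finset α)}
  {Sys : Finset (Finset (Finset α))}

theorem IsPartitionInto.pairwiseDisjoint (hP : IsPartitionInto X k P) :
    (P : Set (Finset α)).PairwiseDisjoint id := by
  intro A hA B hB hAB
  refine disjoint_left.mpr fun x hxA hxB => hAB ?_
  obtain ⟨C, -, hC⟩ := hP.2.2.2 x (hP.2.2.1 A hA hxA)
  exact (hC A ⟨hA, hxA⟩).trans (hC B ⟨hB, hxB⟩).symm

theorem IsPartitionInto.sum_card_s17 (hP : IsPartitionInto X k P) : ∑ A ∈ P, #A = #X := by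
  have hunion : P.biUnion id = X := by
    ext x
    simp only [mem_biUnion, id]
    exact ⟨fun ⟨A, hA, hx⟩ => hP.2.2.1 A hA hx, fun hx => (hP.2.2.2 x hx).exists⟩
  rw [← hunion, card_biUnion hP.pairwiseDisjoint]
  rfl

theorem IsSpernerPartitionSystem.pairwiseDisjoint (hS : IsSpernerPartitionSystem X k Sys) :
    (Sys : Set (Finset (Finset α))).PairwiseDisjoint id :=
  fun P hP Q hQ hPQ => disjoint_left.mpr fun A hAP hAQ => hS.2 P hP Q hQ hPQ A hAP A hAQ subset_rfl

theorem IsSpernerPartitionSystem.isAntichain_biUnion (hS : IsSpernerPartitionSystem X k Sys) :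
    IsAntichain (· ⊆ ·) (SetLike.coe (Sys.biUnion id)) := by
  intro A hA B hB hAB hsub
  simp only [SetLike.mem_coe, mem_biUnion, id] at hA hB
  obtain ⟨P, hP, hAP⟩ := hA
  obtain ⟨Q, hQ, hBQ⟩ := hB
  by_cases hPQ : P = Q
  · subst hPQ
    have hdisj : Disjoint A B := (hS.1 P hP).pairwiseDisjoint hAP hBQ hAB
    exact ((hS.1 P hP).2.1 A hAP).ne_empty (hdisj.eq_bot_of_le hsub)
  · exact hS.2 P hP Q hQ hPQ A hAP B hBQ hsub

end Partition

section UpperBound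

variable {α : Type*} [Fintype α] [DecidableEq α] {k ℓ : ℕ} {P : Finset (Finset α)}
  {Sys : Finset (Finset (Finset α))}

theorem IsSpernerPartitionSystem.sum_sum_inv_choose_le_one
    (hS : IsSpernerPartitionSystem univ k Sys) :
    ∑ P ∈ Sys, ∑ A ∈ P, ((Fintype.card α).choose #A : ℚ)⁻¹ ≤ 1 :=
  calc ∑ P ∈ Sys, ∑ A ∈ P, ((Fintype.card α).choose #A : ℚ)⁻¹
      = ∑ A ∈ Sys.biUnion id, ((Fintype.card α).choose #A : ℚ)⁻¹ :=
        (sum_biUnion hS.pairwiseDisjoint).symm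
    _ ≤ 1 := lubell_yamamoto_meshalkin_inequality_sum_inv_choose hS.isAntichain_biUnion

theorem choose_sub_one_sub_one_pos (hk : 0 < k) :
    0 < (ℓ * k - 1).choose (ℓ - 1) :=
  Nat.choose_pos (by have := Nat.le_mul_of_pos_right ℓ hk; omega)

theorem inv_choose_sub_one_eq (hk : 0 < k) (hℓ : 0 < ℓ) :
    ((ℓ * k - 1).choose (ℓ - 1) : ℚ)⁻¹ = k * ((ℓ * k).choose ℓ : ℚ)⁻¹ := by
  have := choose_sub_one_sub_one_pos (ℓ := ℓ) hk
  rw [← Nat.mul_choose_sub_one_sub_one hℓ]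
  push_cast
  field_simp

theorem IsPartitionInto.inv_choose_le_sum (hP : IsPartitionInto univ k P) (hk : 0 < k)
    (hℓ : 0 < ℓ) (hn : Fintype.card α = ℓ * k) :
    ((ℓ * k - 1).choose (ℓ - 1) : ℚ)⁻¹ ≤
      ∑ A ∈ P, ((Fintype.card α).choose #A : ℚ)⁻¹ := by
  rw [inv_choose_sub_one_eq hk hℓ, ← hn, ← hP.1]
  exact card_mul_le_sum (g := fun c => ((Fintype.card α).choose c : ℚ)⁻¹) (w := card)
    (fun c hc => inv_choose_increment_lt hc) (fun A _ => card_le_univ A)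
    (by rw [hP.sum_card_s17, card_univ, hn, hP.1, mul_comm])

theorem IsPartitionInto.inv_choose_lt_sum (hP : IsPartitionInto univ k P) (hk : 0 < k)
    (hℓ : 0 < ℓ) (hn : Fintype.card α = ℓ * k) {A : Finset α} (hA : A ∈ P)
    (hne : #A ≠ ℓ) :
    ((ℓ * k - 1).choose (ℓ - 1) : ℚ)⁻¹ <
      ∑ A ∈ P, ((Fintype.card α).choose #A : ℚ)⁻¹ := by
  rw [inv_choose_sub_one_eq hk hℓ, ← hn, ← hP.1]
  exact card_mul_lt_sum_of_ne (g := fun c => ((Fintype.card α).choose c : ℚ)⁻¹) (w := card)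
    (fun c hc => inv_choose_increment_lt hc) (fun A _ => card_le_univ A)
    (by rw [hP.sum_card_s17, card_univ, hn, hP.1, mul_comm]) hA hne

theorem IsSpernerPartitionSystem.card_le (hS : IsSpernerPartitionSystem univ k Sys)
    (hk : 0 < k) (hℓ : 0 < ℓ) (hn : Fintype.card α = ℓ * k) :
    #Sys ≤ (ℓ * k - 1).choose (ℓ - 1) := by
  have hpos : (0 : ℚ) < (ℓ * k - 1).choose (ℓ - 1) := mod_cast choose_sub_one_sub_one_pos hk
  suffices (#Sys : ℚ) * ((ℓ * k - 1).choose (ℓ - 1) : ℚ)⁻¹ ≤ 1 by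
    exact_mod_cast (mul_inv_le_iff₀ hpos).mp this |>.trans_eq (one_mul _)
  calc (#Sys : ℚ) * ((ℓ * k - 1).choose (ℓ - 1) : ℚ)⁻¹
      = ∑ _P ∈ Sys, ((ℓ * k - 1).choose (ℓ - 1) : ℚ)⁻¹ := by simp
    _ ≤ ∑ P ∈ Sys, ∑ A ∈ P, ((Fintype.card α).choose #A : ℚ)⁻¹ :=
      sum_le_sum fun P hP => (hS.1 P hP).inv_choose_le_sum hk hℓ hn
    _ ≤ 1 := hS.sum_sum_inv_choose_le_one

theorem IsSpernerPartitionSystem.forall_card_eq_of_card_eq (hS : IsSpernerPartitionSystem univ k Sys)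
    (hk : 0 < k) (hℓ : 0 < ℓ) (hn : Fintype.card α = ℓ * k)
    (hcard : #Sys = (ℓ * k - 1).choose (ℓ - 1)) : ∀ P ∈ Sys, ∀ A ∈ P, #A = ℓ := by
  by_contra! hbad
  obtain ⟨P, hP, A, hA, hne⟩ := hbad
  have hpos : (0 : ℚ) < (ℓ * k - 1).choose (ℓ - 1) := mod_cast choose_sub_one_sub_one_pos hk
  have : (#Sys : ℚ) * ((ℓ * k - 1).choose (ℓ - 1) : ℚ)⁻¹ < 1 :=
    calc (#Sys : ℚ) * ((ℓ * k - 1).choose (ℓ - 1) : ℚ)⁻¹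
        = ∑ _P ∈ Sys, ((ℓ * k - 1).choose (ℓ - 1) : ℚ)⁻¹ := by simp
      _ < ∑ P ∈ Sys, ∑ A ∈ P, ((Fintype.card α).choose #A : ℚ)⁻¹ :=
        sum_lt_sum (fun P hP => (hS.1 P hP).inv_choose_le_sum hk hℓ hn)
          ⟨P, hP, (hS.1 P hP).inv_choose_lt_sum hk hℓ hn hA hne⟩
      _ ≤ 1 := hS.sum_sum_inv_choose_le_one
  rw [hcard, mul_inv_cancel₀ hpos.ne'] at this
  exact lt_irrefl _ this

end UpperBound

theorem exists_card_filter_eq_of_forall_card_le_sum {ι τ : Type*} [Fintype ι] [DecidableEq τ]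
    (A : ι → Finset τ) (T : Finset τ) (d : τ → ℕ) (hA : ∀ i, A i ⊆ T)
    (htotal : ∑ t ∈ T, d t = Fintype.card ι)
    (hall : ∀ I : Finset ι, #I ≤ ∑ t ∈ I.biUnion A, d t) :
    ∃ f : ι → τ, (∀ i, f i ∈ A i) ∧ ∀ t ∈ T, #{i | f i = t} = d t := by
  -- each `t` is split into `d t` slots; Hall's theorem matches the rows injectively to slots
  let slots : Finset τ → Finset (Σ _ : τ, ℕ) := fun U => U.sigma fun t => range (d t)
  have hcard : ∀ U, #(slots U) = ∑ t ∈ U, d t := by simp [slots, card_sigma]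
  have hslots_biUnion : ∀ I : Finset ι, I.biUnion (slots ∘ A) = slots (I.biUnion A) := by
    intro I; ext x; simp [slots]; tauto
  obtain ⟨g, hg_inj, hg_mem⟩ := (all_card_le_biUnion_card_iff_exists_injective (slots ∘ A)).mp
    fun I => by rw [hslots_biUnion, hcard]; exact hall I
  have himage : univ.image g = slots T := by
    refine eq_of_subset_of_card_le ?_ ?_
    · simp only [image_subset_iff, mem_univ, forall_const]
      exact fun i => sigma_mono (hA i) (fun _ => subset_rfl) (hg_mem i)
    · rw [hcard, htotal, card_image_of_injective _ hg_inj, card_univ]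
  refine ⟨fun i => (g i).1, fun i => (mem_sigma.mp (hg_mem i)).1, fun t ht => ?_⟩
  calc #{i | (g i).1 = t} = #((univ.filter fun i => (g i).1 = t).image g) :=
        (card_image_of_injective _ hg_inj).symm
    _ = #(slots {t}) := by
        rw [← filter_image (p := fun x : Σ _ : τ, ℕ => x.1 = t), himage]
        congr 1
        ext x
        simp only [slots, mem_filter, mem_sigma, mem_singleton]
        constructor
        · rintro ⟨⟨-, h⟩, rfl⟩; exact ⟨rfl, h⟩
        · rintro ⟨rfl, h⟩; exact ⟨⟨ht, h⟩, rfl⟩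
    _ = d t := by rw [hcard, sum_singleton]

section UpdateInsert

variable {α κ : Type*} [DecidableEq α] [DecidableEq κ] {u : κ → Finset α} {j₀ : κ}
  {a : α}

theorem mem_update_insert_iff {x : α} {j : κ} :
    x ∈ Function.update u j₀ (insert a (u j₀)) j ↔ (x = a ∧ j = j₀) ∨ x ∈ u j := by
  rcases eq_or_ne j j₀ with rfl | hj
  · simp
  · simp [hj]

variable [Fintype κ]

theorem card_filter_update_insert_of_mem (ha : ∀ j, a ∉ u j) {S : Finset α} (haS : a ∈ S) :
    #{j | Function.update u j₀ (insert a (u j₀)) j = S} =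
      if u j₀ = S.erase a then 1 else 0 := by
  have hfilter : ({j | Function.update u j₀ (insert a (u j₀)) j = S} : Finset κ)
      = if u j₀ = S.erase a then {j₀} else ∅ := by
    ext j
    rcases eq_or_ne j j₀ with rfl | hj
    · have : insert a (u j) = S ↔ u j = S.erase a :=
        ⟨fun h => by rw [← h, erase_insert (ha j)], fun h => by rw [h, insert_erase haS]⟩
      split_ifs <;> simp_all
    · have : u j ≠ S := fun h => ha j (h ▸ haS)
      split_ifs <;> simp [hj, this]
  rw [hfilter]
  split_ifs <;> rfl

theorem card_filter_update_insert_add_of_notMem {S : Finset α} (haS : a ∉ S) :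
    #{j | Function.update u j₀ (insert a (u j₀)) j = S} + (if u j₀ = S then 1 else 0)
      = #{j | u j = S} := by
  have hfilter : ({j | Function.update u j₀ (insert a (u j₀)) j = S} : Finset κ)
      = ({j | u j = S} : Finset κ).erase j₀ := by
    ext j
    rcases eq_or_ne j j₀ with rfl | hj
    · simp only [Function.update_self, mem_filter, mem_univ, true_and, mem_erase, ne_eq,
        not_true_eq_false, false_and, iff_false]
      exact fun h => haS (h ▸ mem_insert_self a _)
    · simp [hj]
  rw [hfilter]
  split_ifs with h
  · exact card_erase_add_one (by simp [h])
  · rw [erase_eq_of_notMem (by simp [h]), add_zero]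

end UpdateInsert

namespace Baranyai

variable {α ι κ : Type*} [DecidableEq α] [Fintype κ]

theorem sum_sum_eq_sum_mul (F : ι → κ → Finset α) (h : Finset α → ℕ) (I : Finset ι)
    (W : Finset (Finset α)) (hW : ∀ i ∈ I, ∀ j, F i j ∈ W) :
    ∑ i ∈ I, ∑ j, h (F i j) = ∑ S ∈ W, (∑ i ∈ I, #{j | F i j = S}) * h S := by
  calc ∑ i ∈ I, ∑ j, h (F i j) = ∑ i ∈ I, ∑ S ∈ W, #{j | F i j = S} * h S := by
        refine sum_congr rfl fun i hi => ?_
        rw [← sum_fiberwise_of_maps_to' (fun j _ => hW i hi j) h]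
        simp only [sum_const, smul_eq_mul]
    _ = ∑ S ∈ W, (∑ i ∈ I, #{j | F i j = S}) * h S := by
        simp_rw [sum_mul]
        exact sum_comm

variable [Fintype ι]

def partCount (F : ι → κ → Finset α) (S : Finset α) : ℕ := #{p : ι × κ | F p.1 p.2 = S}

theorem partCount_eq_sum (F : ι → κ → Finset α) (S : Finset α) :
    partCount F S = ∑ i, #{j | F i j = S} := by
  simp only [partCount, card_filter, Fintype.sum_prod_type]

/-- The invariant of Baranyai's induction. Parts may be empty, and `r` is the number of points
still to be added; for `X = univ` and `r = 0` every `ℓ`-set is a part exactly once. -/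
structure IsPartialFactorization (X : Finset α) (r ℓ : ℕ) (F : ι → κ → Finset α) :
    Prop where
  subset : ∀ i j, F i j ⊆ X
  existsUnique_mem : ∀ i, ∀ x ∈ X, ∃! j, x ∈ F i j
  card_le : ∀ i j, #(F i j) ≤ ℓ
  partCount_eq : ∀ S ⊆ X, #S ≤ ℓ → partCount F S = r.choose (ℓ - #S)

/-- The number of rows in which a part equal to `S` must receive the next point. -/
def demand (r ℓ : ℕ) (S : Finset α) : ℕ := (r + 1).choose (ℓ - #S) - r.choose (ℓ - #S)

namespace IsPartialFactorization

variable {X : Finset α} {r ℓ : ℕ} {F : ι → κ → Finset α}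

theorem sum_card_s17 (hF : IsPartialFactorization X r ℓ F) (i : ι) : ∑ j, #(F i j) = #X := by
  have hunion : univ.biUnion (F i) = X := by
    ext x
    simp only [mem_biUnion, mem_univ, true_and]
    exact ⟨fun ⟨j, hj⟩ => hF.subset i j hj, fun hx => (hF.existsUnique_mem i x hx).exists⟩
  rw [← hunion, card_biUnion]
  intro j _ j' _ hjj'
  refine disjoint_left.mpr fun x hx hx' => hjj' ?_
  exact (hF.existsUnique_mem i x (hF.subset i j hx)).unique hx hx'

theorem sum_sub_card (hF : IsPartialFactorization X r ℓ F) {s : ℕ}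
    (hκ : Fintype.card κ * ℓ = #X + s) (i : ι) : ∑ j, (ℓ - #(F i j)) = s := by
  rw [sum_tsub_distrib _ fun j _ => hF.card_le i j, hF.sum_card_s17, sum_const, card_univ,
    smul_eq_mul, hκ, Nat.add_sub_cancel_left]

theorem partCount_mul_eq (hF : IsPartialFactorization X (r + 1) ℓ F) {S : Finset α}
    (hS : S ⊆ X) (hSℓ : #S ≤ ℓ) :
    partCount F S * (ℓ - #S) = (r + 1) * demand r ℓ S := by
  rw [hF.partCount_eq S hS hSℓ, demand, Nat.add_one_choose_mul]

theorem card_le_sum_demand (hF : IsPartialFactorization X (r + 1) ℓ F)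
    (hκ : Fintype.card κ * ℓ = #X + (r + 1)) (I : Finset ι) (W : Finset (Finset α))
    (hW : ∀ i ∈ I, ∀ j, F i j ∈ W) (hWX : ∀ S ∈ W, S ⊆ X ∧ #S ≤ ℓ) :
    #I ≤ ∑ S ∈ W, demand r ℓ S := by
  refine Nat.le_of_mul_le_mul_left (c := r + 1) ?_ (by omega)
  calc (r + 1) * #I = ∑ i ∈ I, ∑ j, (ℓ - #(F i j)) := by
        rw [sum_congr rfl fun i _ => hF.sum_sub_card hκ i, sum_const, smul_eq_mul, mul_comm]
    _ = ∑ S ∈ W, (∑ i ∈ I, #{j | F i j = S}) * (ℓ - #S) :=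
        sum_sum_eq_sum_mul F (fun S => ℓ - #S) I W hW
    _ ≤ ∑ S ∈ W, partCount F S * (ℓ - #S) := by
        gcongr with S
        rw [partCount_eq_sum]
        exact sum_le_sum_of_subset (subset_univ I)
    _ = (r + 1) * ∑ S ∈ W, demand r ℓ S := by
        rw [mul_sum]
        exact sum_congr rfl fun S hS => hF.partCount_mul_eq (hWX S hS).1 (hWX S hS).2

theorem sum_demand (hF : IsPartialFactorization X (r + 1) ℓ F)
    (hκ : Fintype.card κ * ℓ = #X + (r + 1)) :
    ∑ S ∈ {S ∈ X.powerset | #S ≤ ℓ}, demand r ℓ S = Fintype.card ι := by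
  refine Nat.eq_of_mul_eq_mul_left (n := r + 1) (by omega) ?_
  calc (r + 1) * ∑ S ∈ {S ∈ X.powerset | #S ≤ ℓ}, demand r ℓ S
      = ∑ S ∈ {S ∈ X.powerset | #S ≤ ℓ}, partCount F S * (ℓ - #S) := by
        rw [mul_sum]
        refine sum_congr rfl fun S hS => ?_
        rw [mem_filter, mem_powerset] at hS
        exact (hF.partCount_mul_eq hS.1 hS.2).symm
    _ = ∑ i, ∑ j, (ℓ - #(F i j)) := by
        simp_rw [partCount_eq_sum]
        refine (sum_sum_eq_sum_mul F (fun S => ℓ - #S) univ _ fun i _ j => ?_).symm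
        simp [hF.subset i j, hF.card_le i j]
    _ = (r + 1) * Fintype.card ι := by
        rw [sum_congr rfl fun i _ => hF.sum_sub_card hκ i, sum_const, card_univ, smul_eq_mul,
          mul_comm]

end IsPartialFactorization

section Update

variable [DecidableEq κ] {a : α}

theorem partCount_update_insert_of_mem (F : ι → κ → Finset α) (j : ι → κ)
    (ha : ∀ i j, a ∉ F i j) {S : Finset α} (haS : a ∈ S) :
    partCount (fun i => Function.update (F i) (j i) (insert a (F i (j i)))) S
      = #{i | F i (j i) = S.erase a} := by
  rw [partCount_eq_sum, card_filter]
  exact sum_congr rfl fun i _ => card_filter_update_insert_of_mem (ha i) haS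

theorem partCount_update_insert_add_of_notMem (F : ι → κ → Finset α) (j : ι → κ)
    {S : Finset α} (haS : a ∉ S) :
    partCount (fun i => Function.update (F i) (j i) (insert a (F i (j i)))) S
      + #{i | F i (j i) = S} = partCount F S := by
  rw [partCount_eq_sum, partCount_eq_sum, card_filter, ← sum_add_distrib]
  exact sum_congr rfl fun i _ => card_filter_update_insert_add_of_notMem haS

namespace IsPartialFactorization

variable {X : Finset α} {r ℓ : ℕ} {F : ι → κ → Finset α}

theorem partCount_update_insert (hF : IsPartialFactorization X (r + 1) ℓ F) (ha : a ∉ X)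
    (j : ι → κ) (hj : ∀ S ∈ {S ∈ X.powerset | #S ≤ ℓ}, #{i | F i (j i) = S} = demand r ℓ S)
    {S : Finset α} (hS : S ⊆ insert a X) (hSℓ : #S ≤ ℓ) :
    partCount (fun i => Function.update (F i) (j i) (insert a (F i (j i)))) S
      = r.choose (ℓ - #S) := by
  by_cases haS : a ∈ S
  · have hS' : S.erase a ⊆ X := fun x hx => by
      rcases mem_insert.mp (hS (mem_of_mem_erase hx)) with rfl | h
      · exact absurd rfl (ne_of_mem_erase hx)
      · exact h
    have hcard := card_erase_of_mem haS
    have hpos : 0 < #S := card_pos.mpr ⟨a, haS⟩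
    rw [partCount_update_insert_of_mem F j (fun i j h => ha (hF.subset i j h)) haS,
      hj _ (by simpa using ⟨hS', by omega⟩), demand, hcard,
      show ℓ - (#S - 1) = ℓ - #S + 1 by omega, Nat.choose_succ_succ', Nat.add_sub_cancel_right]
  · have hS' : S ⊆ X := fun x hx =>
      (mem_insert.mp (hS hx)).resolve_left (by rintro rfl; exact haS hx)
    have := partCount_update_insert_add_of_notMem F j haS
    rw [hj _ (by simpa using ⟨hS', hSℓ⟩), hF.partCount_eq S hS' hSℓ, demand] at this
    have hle := Nat.choose_le_choose (ℓ - #S) (Nat.le_add_right r 1)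
    omega

theorem update_insert (hF : IsPartialFactorization X (r + 1) ℓ F) (ha : a ∉ X) (j : ι → κ)
    (hj : ∀ S ∈ {S ∈ X.powerset | #S ≤ ℓ}, #{i | F i (j i) = S} = demand r ℓ S) :
    IsPartialFactorization (insert a X) r ℓ
      (fun i => Function.update (F i) (j i) (insert a (F i (j i)))) := by
  have haF : ∀ i j, a ∉ F i j := fun i j h => ha (hF.subset i j h)
  refine ⟨fun i j' => ?_, fun i x hx => ?_, fun i j' => ?_,
    fun S hS hSℓ => hF.partCount_update_insert ha j hj hS hSℓ⟩
  · intro x hx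
    rw [mem_update_insert_iff] at hx
    rcases hx with ⟨rfl, -⟩ | hx
    · exact mem_insert_self x X
    · exact mem_insert_of_mem (hF.subset i j' hx)
  · simp_rw [mem_update_insert_iff]
    rcases mem_insert.mp hx with rfl | hxX
    · simp [haF i]
    · simpa [ne_of_mem_of_not_mem hxX ha] using hF.existsUnique_mem i x hxX
  · rcases eq_or_ne j' (j i) with rfl | hj'
    · -- the extended part is counted in `demand`, which vanishes on parts of size `ℓ`
      have hpos : 0 < demand r ℓ (F i (j i)) := by
        rw [← hj _ (by simpa using ⟨hF.subset i (j i), hF.card_le i (j i)⟩)]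
        exact card_pos.mpr ⟨i, by simp⟩
      have hlt : #(F i (j i)) < ℓ := by
        by_contra! h
        simp [demand, Nat.sub_eq_zero_of_le h] at hpos
      simpa [card_insert_of_notMem (haF i (j i))] using hlt
    · simpa [hj'] using hF.card_le i j'

theorem exists_insert (hF : IsPartialFactorization X (r + 1) ℓ F) (ha : a ∉ X)
    (hκ : Fintype.card κ * ℓ = #X + (r + 1)) :
    ∃ G : ι → κ → Finset α, IsPartialFactorization (insert a X) r ℓ G := by
  have hparts : ∀ i, ∀ S ∈ univ.image (F i), S ⊆ X ∧ #S ≤ ℓ := fun i S hS => by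
    obtain ⟨j, -, rfl⟩ := mem_image.mp hS
    exact ⟨hF.subset i j, hF.card_le i j⟩
  obtain ⟨f, hf_mem, hf_card⟩ := exists_card_filter_eq_of_forall_card_le_sum
    (fun i => univ.image (F i)) {S ∈ X.powerset | #S ≤ ℓ} (demand r ℓ)
    (fun i S hS => by simpa using hparts i S hS) (hF.sum_demand hκ)
    fun I => hF.card_le_sum_demand hκ I _
      (fun i hi j => mem_biUnion.mpr ⟨i, hi, mem_image_of_mem _ (mem_univ j)⟩)
      fun S hS => by
        obtain ⟨i, -, hS⟩ := mem_biUnion.mp hS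
        exact hparts i S hS
  choose j hj using fun i => mem_image.mp (hf_mem i)
  refine ⟨_, hF.update_insert ha j fun S hS => ?_⟩
  simp_rw [(hj _).2]
  exact hf_card S hS

end IsPartialFactorization

end Update

section Complete

variable [Fintype α] {ℓ : ℕ}

theorem isPartialFactorization_empty
    (hι : Fintype.card ι * Fintype.card κ = (Fintype.card α).choose ℓ) :
    IsPartialFactorization (∅ : Finset α) (Fintype.card α) ℓ
      (fun (_ : ι) (_ : κ) => ∅) := by
  refine ⟨fun _ _ => subset_rfl, fun _ x hx => absurd hx (notMem_empty x), fun _ _ => by simp,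
    fun S hS _ => ?_⟩
  rw [subset_empty.mp hS, partCount, filter_true_of_mem fun _ _ => rfl, card_univ,
    Fintype.card_prod, hι, card_empty, Nat.sub_zero]

theorem exists_isPartialFactorization_univ [DecidableEq κ]
    (hκ : Fintype.card κ * ℓ = Fintype.card α)
    (hι : Fintype.card ι * Fintype.card κ = (Fintype.card α).choose ℓ) :
    ∃ F : ι → κ → Finset α, IsPartialFactorization univ 0 ℓ F := by
  suffices ∀ X : Finset α, ∃ F : ι → κ → Finset α,
      IsPartialFactorization X (Fintype.card α - #X) ℓ F by
    simpa using this univ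
  intro X
  induction X using Finset.induction_on with
  | empty => exact ⟨_, isPartialFactorization_empty hι⟩
  | insert a X ha ih =>
    obtain ⟨F, hF⟩ := ih
    have hlt := card_lt_univ_of_notMem ha
    rw [show Fintype.card α - #X = Fintype.card α - #(insert a X) + 1 by
      rw [card_insert_of_notMem ha]; omega] at hF
    exact hF.exists_insert ha (by rw [card_insert_of_notMem ha] at *; omega)

namespace IsPartialFactorization

variable {F : ι → κ → Finset α}

theorem card_eq (hF : IsPartialFactorization univ 0 ℓ F) (i : ι) (j : κ) : #(F i j) = ℓ := by
  have hpos : 0 < partCount F (F i j) := card_pos.mpr ⟨(i, j), by simp⟩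
  rw [hF.partCount_eq _ (subset_univ _) (hF.card_le i j)] at hpos
  have := hF.card_le i j
  by_contra h
  rw [Nat.choose_eq_zero_of_lt (by omega)] at hpos
  exact hpos.false

theorem eq_and_eq_of_eq (hF : IsPartialFactorization univ 0 ℓ F) {i i' : ι} {j j' : κ}
    (h : F i j = F i' j') : i = i' ∧ j = j' := by
  have hone : partCount F (F i j) = 1 := by
    rw [hF.partCount_eq _ (subset_univ _) (hF.card_le i j), hF.card_eq, Nat.sub_self,
      Nat.choose_zero_right]
  exact Prod.ext_iff.mp (card_le_one.mp hone.le (i, j) (by simp) (i', j') (by simp [h]))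

theorem isPartitionInto (hF : IsPartialFactorization univ 0 ℓ F) (hℓ : 0 < ℓ) (i : ι) :
    IsPartitionInto univ (Fintype.card κ) (univ.image (F i)) := by
  refine ⟨?_, ?_, fun _ _ => subset_univ _, fun x _ => ?_⟩
  · rw [card_image_of_injective _ fun j j' h => (hF.eq_and_eq_of_eq h).2, card_univ]
  · simp only [mem_image, mem_univ, true_and, forall_exists_index, forall_apply_eq_imp_iff]
    exact fun j => card_pos.mp (hF.card_eq i j ▸ hℓ)
  · obtain ⟨j, hj, huniq⟩ := hF.existsUnique_mem i x (mem_univ x)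
    refine ⟨F i j, ⟨mem_image_of_mem _ (mem_univ j), hj⟩, ?_⟩
    rintro _ ⟨hA, hxA⟩
    obtain ⟨j', -, rfl⟩ := mem_image.mp hA
    rw [huniq j' hxA]

theorem isSpernerPartitionSystem (hF : IsPartialFactorization univ 0 ℓ F) (hℓ : 0 < ℓ) :
    IsSpernerPartitionSystem univ (Fintype.card κ) (univ.image fun i => univ.image (F i)) := by
  refine ⟨fun P hP => ?_, fun P hP Q hQ hPQ A hA B hB hAB => hPQ ?_⟩
  · obtain ⟨i, -, rfl⟩ := mem_image.mp hP
    exact hF.isPartitionInto hℓ i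
  · obtain ⟨i, -, rfl⟩ := mem_image.mp hP
    obtain ⟨i', -, rfl⟩ := mem_image.mp hQ
    obtain ⟨j, -, rfl⟩ := mem_image.mp hA
    obtain ⟨j', -, rfl⟩ := mem_image.mp hB
    rw [(hF.eq_and_eq_of_eq (eq_of_subset_of_card_le hAB (by rw [hF.card_eq, hF.card_eq]))).1]

theorem card_image_image [Nonempty κ] (hF : IsPartialFactorization univ 0 ℓ F) :
    #(univ.image fun i => univ.image (F i)) = Fintype.card ι := by
  refine (card_image_of_injective _ fun i i' h => ?_).trans card_univ
  obtain ⟨j⟩ := ‹Nonempty κ›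
  obtain ⟨j', -, hj'⟩ := mem_image.mp (h ▸ mem_image_of_mem (F i) (mem_univ j))
  exact (hF.eq_and_eq_of_eq hj').1.symm

end IsPartialFactorization

end Complete

end Baranyai

theorem exists_isSpernerPartitionSystem_card_eq {α : Type*} [Fintype α] [DecidableEq α]
    {k ℓ : ℕ} (hk : 0 < k) (hℓ : 0 < ℓ) (hn : Fintype.card α = ℓ * k) :
    ∃ Sys : Finset (Finset (Finset α)),
      IsSpernerPartitionSystem univ k Sys ∧ #Sys = (ℓ * k - 1).choose (ℓ - 1) := by
  obtain ⟨F, hF⟩ := Baranyai.exists_isPartialFactorization_univ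
    (ι := Fin ((ℓ * k - 1).choose (ℓ - 1))) (κ := Fin k) (α := α) (ℓ := ℓ)
    (by rw [Fintype.card_fin, hn, mul_comm])
    (by rw [Fintype.card_fin, Fintype.card_fin, hn, mul_comm, Nat.mul_choose_sub_one_sub_one hℓ])
  have : Nonempty (Fin k) := ⟨⟨0, hk⟩⟩
  refine ⟨_, ?_, hF.card_image_image.trans (Fintype.card_fin _)⟩
  simpa using hF.isSpernerPartitionSystem hℓ

theorem SP_divisible (k ℓ : ℕ) (hk : 1 ≤ k) (hℓ : 1 ≤ ℓ) :
    SP (ℓ * k) k = Nat.choose (ℓ * k - 1) (ℓ - 1) ∧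
    ∀ Sys : Finset (Finset (Finset (Fin (ℓ * k)))),
      IsSpernerPartitionSystem Finset.univ k Sys →
      Sys.card = Nat.choose (ℓ * k - 1) (ℓ - 1) →
      ∀ P ∈ Sys, ∀ A ∈ P, A.card = ℓ := by
  have hn : Fintype.card (Fin (ℓ * k)) = ℓ * k := Fintype.card_fin _
  obtain ⟨Sys₀, hSys₀, hcard₀⟩ := exists_isSpernerPartitionSystem_card_eq hk hℓ hn
  refine ⟨IsGreatest.csSup_eq ⟨⟨Sys₀, hSys₀, hcard₀⟩, ?_⟩,
    fun Sys hS hcard => hS.forall_card_eq_of_card_eq hk hℓ hn hcard⟩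
  rintro _ ⟨Sys, hS, rfl⟩
  exact hS.card_le hk hℓ hn
end
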